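/- arXiv:0706.3560 — 10 statements merged into one kernel-verified Lean document; each statement's English description precedes it below -/
import Mathlib

section
/- Let φ : I → I be a reparametrization and let a < b be points of I. Then φ(]a,b[) ≠ ]φ(a),φ(b)[ if and only if there exists c ∈ ]a,b[ such that φ is constant on [a,c] or φ is constant on [c,b]. -/
open unitInterval

/-- `φ` is a reparametrization of the unit interval: a continuous weakly
increasing self-map of `I` with `φ 0 = 0` and `φ 1 = 1` (such a map is
automatically surjective). -/
def IsRepar (φ : I → I) : Prop :=
  Continuous φ ∧ Monotone φ ∧ φ 0 = 0 ∧ φ 1 = 1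

/-- `p` is constant on the closed subinterval `[a, b]` of `I`. -/
def ConstOn {X : Type*} (p : I → X) (a b : I) : Prop :=
  ∀ s ∈ Set.Icc a b, ∀ t ∈ Set.Icc a b, p s = p t

lemma constOn_of_eq {φ : I → I} (hm : Monotone φ) {a b : I}
    (h : φ a = φ b) : ConstOn φ a b := by
  intro s hs t ht
  have h1 : φ s = φ a := le_antisymm (h ▸ hm hs.2) (hm hs.1)
  have h2 : φ t = φ a := le_antisymm (h ▸ hm ht.2) (hm ht.1)
  rw [h1, h2]

/-- For a reparametrization `φ` and `a < b` in `I`, the image `φ(]a,b[)`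
differs from `]φ(a),φ(b)[` if and only if there is `c ∈ ]a,b[` such that
`φ` is constant on `[a,c]` or constant on `[c,b]`. -/
theorem image_Ioo_ne_Ioo_iff_constOn
    (φ : I → I) (hφ : IsRepar φ) (a b : I) (hab : a < b) :
    φ '' Set.Ioo a b ≠ Set.Ioo (φ a) (φ b) ↔
      ∃ c ∈ Set.Ioo a b, ConstOn φ a c ∨ ConstOn φ c b := by
  obtain ⟨hcont, hm, -, -⟩ := hφ
  constructor
  · intro hne
    by_contra h
    push_neg at h
    apply hne
    ext y
    constructor
    · rintro ⟨c, hc, rfl⟩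
      refine ⟨lt_of_le_of_ne (hm hc.1.le) ?_, lt_of_le_of_ne (hm hc.2.le) ?_⟩
      · exact fun heq => (h c hc).1 (constOn_of_eq hm heq)
      · exact fun heq => (h c hc).2 (constOn_of_eq hm heq)
    · intro hy
      set g : ℝ → ℝ := fun x => (φ (Set.projIcc 0 1 zero_le_one x) : ℝ) with hg
      have hgc : Continuous g :=
        continuous_subtype_val.comp (hcont.comp continuous_projIcc)
      have hga : g a = φ a := by simp [hg, Set.projIcc_val]
      have hgb : g b = φ b := by simp [hg, Set.projIcc_val]
      have hyy : (y : ℝ) ∈ Set.Icc (g ↑a) (g ↑b) := by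
        rw [hga, hgb]; exact ⟨hy.1.le, hy.2.le⟩
      obtain ⟨x, hx, hxy⟩ :=
        intermediate_value_Icc (Subtype.coe_le_coe.mpr hab.le) hgc.continuousOn hyy
      set c : I := Set.projIcc 0 1 zero_le_one x with hcdef
      have hca : a ≤ c := by
        rw [hcdef, ← Set.projIcc_val zero_le_one a]
        exact Set.monotone_projIcc zero_le_one hx.1
      have hcb : c ≤ b := by
        rw [hcdef, ← Set.projIcc_val zero_le_one b]
        exact Set.monotone_projIcc zero_le_one hx.2
      have hcy : φ c = y := Subtype.coe_injective hxy
      refine ⟨c, ⟨lt_of_le_of_ne hca ?_, lt_of_le_of_ne hcb ?_⟩, hcy⟩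
      · intro h; exact hy.1.ne (by rw [h, hcy])
      · intro h; exact hy.2.ne' (by rw [← h, hcy])
  · rintro ⟨c, hc, hco | hco⟩ heq
    · have hmem : φ c ∈ Set.Ioo (φ a) (φ b) := heq ▸ ⟨c, hc, rfl⟩
      have : φ a = φ c := hco a ⟨le_rfl, hc.1.le⟩ c ⟨hc.1.le, le_rfl⟩
      exact hmem.1.ne this
    · have hmem : φ c ∈ Set.Ioo (φ a) (φ b) := heq ▸ ⟨c, hc, rfl⟩
      have : φ c = φ b := hco c ⟨le_rfl, hc.2.le⟩ b ⟨hc.2.le, le_rfl⟩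
      exact hmem.2.ne this
end

section
/- With respect to the supremum metric on continuous self-maps of I (which induces the compact-open topology), both the set Homeo₊(I) of increasing self-homeomorphisms of I and its complement Rep₊(I) \ Homeo₊(I) are dense in the set Rep₊(I) of reparametrizations: for every reparametrization φ and every ε > 0 there exist ρ ∈ Homeo₊(I) and ψ ∈ Rep₊(I) \ Homeo₊(I) with sup_{t∈I} |φ(t) − ρ(t)| ≤ ε and sup_{t∈I} |φ(t) − ψ(t)| ≤ ε. -/
open unitInterval

/-- With respect to the supremum metric, both `Homeo₊(I)` (the strictly
increasing reparametrizations) and its complement `Rep₊(I) \ Homeo₊(I)`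
are dense in `Rep₊(I)`: every reparametrization `φ` can be approximated
within any `ε > 0` both by an increasing self-homeomorphism `ρ` of `I`
and by a non-injective reparametrization `ψ`. -/
theorem homeo_and_complement_dense_in_repar
    (φ : I → I) (hφ : IsRepar φ) (ε : ℝ) (hε : 0 < ε) :
    (∃ ρ : I → I, IsRepar ρ ∧ StrictMono ρ ∧ ∀ t : I, |(φ t : ℝ) - (ρ t : ℝ)| ≤ ε) ∧
    (∃ ψ : I → I, IsRepar ψ ∧ ¬ StrictMono ψ ∧ ∀ t : I, |(φ t : ℝ) - (ψ t : ℝ)| ≤ ε) := by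
  obtain ⟨hcont, hmono, h0, h1⟩ := hφ
  set δ : ℝ := min ε 1 with hδdef
  have hδ0 : 0 < δ := lt_min hε one_pos
  have hδ1 : δ ≤ 1 := min_le_right _ _
  have hδε : δ ≤ ε := min_le_left _ _
  constructor
  · -- strictly monotone approximant
    have hmem : ∀ t : I, (1 - δ) * (φ t : ℝ) + δ * (t : ℝ) ∈ Set.Icc (0:ℝ) 1 := by
      intro t
      have h1t := (φ t).2.1; have h2t := (φ t).2.2
      have h3t := t.2.1; have h4t := t.2.2
      constructor <;> nlinarith
    refine ⟨fun t => ⟨(1 - δ) * (φ t : ℝ) + δ * (t : ℝ), hmem t⟩, ⟨?_, ?_, ?_, ?_⟩, ?_, ?_⟩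
    · exact (((continuous_const.mul (continuous_subtype_val.comp hcont)).add
        (continuous_const.mul continuous_subtype_val))).subtype_mk _
    · intro s t hst
      have h1 : (φ s : ℝ) ≤ (φ t : ℝ) := hmono hst
      have h2 : (s : ℝ) ≤ (t : ℝ) := hst
      exact Subtype.mk_le_mk.mpr (by nlinarith)
    · ext; simp [h0]
    · ext; simp [h1]
    · intro s t hst
      have h1 : (φ s : ℝ) ≤ (φ t : ℝ) := hmono hst.le
      have h2 : (s : ℝ) < (t : ℝ) := hst
      exact Subtype.mk_lt_mk.mpr (by nlinarith)
    · intro t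
      have h1t := (φ t).2.1; have h2t := (φ t).2.2
      have h3t := t.2.1; have h4t := t.2.2
      simp only []
      rw [abs_le]
      constructor <;> nlinarith
  · -- non-injective approximant
    set c : ℝ := 1 + δ with hcdef
    have hc1 : 1 < c := by simp [hcdef]; linarith
    have hmem : ∀ t : I, min 1 (c * (φ t : ℝ)) ∈ Set.Icc (0:ℝ) 1 := by
      intro t
      have h1t := (φ t).2.1
      exact ⟨le_min zero_le_one (by nlinarith), min_le_left _ _⟩
    set ψ : I → I := fun t => ⟨min 1 (c * (φ t : ℝ)), hmem t⟩ with hψdef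
    have hψrep : IsRepar ψ := by
      refine ⟨?_, ?_, ?_, ?_⟩
      · exact (continuous_const.min (continuous_const.mul
          (continuous_subtype_val.comp hcont))).subtype_mk _
      · intro s t hst
        have h1 : (φ s : ℝ) ≤ (φ t : ℝ) := hmono hst
        exact Subtype.mk_le_mk.mpr (min_le_min le_rfl (by nlinarith))
      · simp only [hψdef]; ext; simp [h0]
      · simp only [hψdef]; ext
        simp only [h1, Set.Icc.coe_one, mul_one]
        exact min_eq_left hc1.le
    refine ⟨ψ, hψrep, ?_, ?_⟩
    · -- not strictly monotone
      intro hsm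
      have hy : (1 / c : ℝ) ∈ Set.Icc (0:ℝ) 1 := by
        constructor
        · positivity
        · rw [div_le_one (by linarith)]; linarith
      have hsurj : Set.Icc (φ 0) (φ 1) ⊆ Set.range φ :=
        intermediate_value_univ 0 1 hcont
      obtain ⟨t, ht⟩ : ∃ t : I, φ t = ⟨1 / c, hy⟩ := by
        have : (⟨1 / c, hy⟩ : I) ∈ Set.Icc (φ 0) (φ 1) := by
          rw [h0, h1]
          exact ⟨Subtype.mk_le_mk.mpr hy.1, Subtype.mk_le_mk.mpr hy.2⟩
        exact hsurj this
      have ht1 : t < 1 := by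
        rcases lt_or_eq_of_le t.2.2 with h | h
        · exact Subtype.mk_lt_mk.mpr h
        · exfalso
          have : t = 1 := Subtype.ext h
          rw [this, h1] at ht
          have : (1 : ℝ) = 1 / c := congrArg Subtype.val ht
          rw [eq_div_iff (by linarith)] at this
          nlinarith
      have h1' : ψ t = ψ 1 := by
        have hc0 : c ≠ 0 := by linarith
        apply Subtype.ext
        simp only [hψdef, ht, h1]
        simp [hc0, min_eq_left hc1.le]
      exact absurd h1' (ne_of_lt (hsm ht1))
    · intro t
      have h1t := (φ t).2.1; have h2t := (φ t).2.2
      have hle : (φ t : ℝ) ≤ min 1 (c * (φ t : ℝ)) :=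
        le_min h2t (by nlinarith)
      have hge : min 1 (c * (φ t : ℝ)) ≤ (φ t : ℝ) + δ := by
        refine min_le_of_right_le ?_
        nlinarith
      rw [abs_le]
      exact ⟨by linarith, by linarith⟩
end

section
/- For every countable subset C ⊆ I there exists a reparametrization φ : I → I whose set of φ-stop values is exactly C, i.e. C_φ = C. -/
open unitInterval

/-- `[a, b]` is a `p`-stop interval: a nondegenerate closed subinterval of `I`
on which `p` is constant, maximal (w.r.t. inclusion) among nondegenerate closed
subintervals on which `p` is constant. -/
def IsStopInterval {X : Type*} (p : I → X) (a b : I) : Prop :=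
  a < b ∧ ConstOn p a b ∧
    ∀ a' b' : I, a' ≤ a → b ≤ b' → ConstOn p a' b' → a' = a ∧ b' = b

/-- The set `C_p` of `p`-stop values: the constant values taken by `p`
on its stop intervals. -/
def StopValues {X : Type*} (p : I → X) : Set X :=
  {c | ∃ a b : I, IsStopInterval p a b ∧ p a = c}

/-!
Give the points of `C` positive weights `w c` with finite total `W`. The map
`ψ x = (x + ∑_{c < x} w c) / (1 + W)` is strictly increasing, jumps by `w c / (1 + W)` at each
`c ∈ C` and is continuous at every other point. Its generalized inverse
`φ t = sup {x | ψ x ≤ t}` is monotone and hits every `x` (at `t = ψ x`), hence is a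
reparametrization; it takes the value `c` on the whole gap that `ψ` jumps over at `c`, and a
nondegenerate fiber `φ⁻¹ {c}` forces a jump of `ψ` at `c`. For a continuous monotone map the
fibers are closed intervals, so its stop values are exactly the values with a nondegenerate fiber.
-/

open Set Filter Topology

section StopValues

variable {X : Type*}

lemma isStopInterval_of_preimage_eq_Icc {p : I → X} {a b : I} (hab : a < b)
    (h : p ⁻¹' {p a} = Icc a b) : IsStopInterval p a b := by
  refine ⟨hab, fun s hs t ht => ?_, fun a' b' ha' hb' hconst => ?_⟩
  · rw [← h] at hs ht
    exact hs.trans ht.symm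
  · have hab' : a ∈ Icc a' b' := ⟨ha', hab.le.trans hb'⟩
    have ha'_mem : a' ∈ p ⁻¹' {p a} := hconst a' ⟨le_rfl, hab'.1.trans hab'.2⟩ a hab'
    have hb'_mem : b' ∈ p ⁻¹' {p a} := hconst b' ⟨hab'.1.trans hab'.2, le_rfl⟩ a hab'
    rw [h] at ha'_mem hb'_mem
    exact ⟨le_antisymm ha' ha'_mem.1, le_antisymm hb'_mem.2 hb'⟩

theorem stopValues_eq_of_continuous_of_monotone [PartialOrder X] [TopologicalSpace X]
    [T1Space X] {p : I → X} (hc : Continuous p) (hm : Monotone p) :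
    StopValues p = {c | ∃ s t, s < t ∧ p s = c ∧ p t = c} := by
  ext c
  constructor
  · rintro ⟨a, b, ⟨hab, hconst, -⟩, rfl⟩
    exact ⟨a, b, hab, rfl, hconst b ⟨hab.le, le_rfl⟩ a ⟨le_rfl, hab.le⟩⟩
  · rintro ⟨s, t, hst, rfl, hts⟩
    set S := p ⁻¹' {p s}
    have hS_closed : IsClosed S := isClosed_singleton.preimage hc
    have hinf : sInf S ∈ S := hS_closed.sInf_mem ⟨s, rfl⟩
    have hsup : sSup S ∈ S := hS_closed.sSup_mem ⟨s, rfl⟩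
    have hS : S = Icc (sInf S) (sSup S) :=
      subset_antisymm (fun x hx => ⟨sInf_le hx, le_sSup hx⟩)
        ((ordConnected_singleton.preimage_mono hm).out hinf hsup)
    have hlt : sInf S < sSup S :=
      (sInf_le (show s ∈ S from rfl)).trans_lt (hst.trans_le (le_sSup (show t ∈ S from hts)))
    refine ⟨sInf S, sSup S, isStopInterval_of_preimage_eq_Icc hlt ?_, hinf⟩
    rwa [show p (sInf S) = p s from hinf]

end StopValues

section WeightBelow

variable {ι : Type*} (a : ι → ℝ) (w : ι → ℝ)

noncomputable def weightBelow (x : ℝ) : ℝ :=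
  ∑' i, {i | a i < x}.indicator w i

variable {a w}

lemma weightBelow_nonneg (hw0 : 0 ≤ w) (x : ℝ) : 0 ≤ weightBelow a w x :=
  tsum_nonneg fun i => indicator_nonneg (fun i _ => hw0 i) i

lemma weightBelow_le_tsum (hw : Summable w) (hw0 : 0 ≤ w) (x : ℝ) :
    weightBelow a w x ≤ ∑' i, w i :=
  (hw.indicator _).tsum_le_tsum (indicator_le_self' fun i _ => hw0 i) hw

lemma monotone_weightBelow (hw : Summable w) (hw0 : 0 ≤ w) : Monotone (weightBelow a w) :=
  fun _ _ hxy => (hw.indicator _).tsum_le_tsum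
    (indicator_le_indicator_of_subset (fun _ hi => lt_of_lt_of_le hi hxy) hw0) (hw.indicator _)

lemma weightBelow_eq_zero {x : ℝ} (h : ∀ i, x ≤ a i) : weightBelow a w x = 0 := by
  simp [weightBelow, fun i => not_lt.2 (h i)]

lemma weightBelow_eq_tsum {x : ℝ} (h : ∀ i, a i < x) : weightBelow a w x = ∑' i, w i := by
  simp [weightBelow, h]

lemma weightBelow_add_le (hw : Summable w) (hw0 : 0 ≤ w) {i : ι} {y : ℝ} (h : a i < y) :
    weightBelow a w (a i) + w i ≤ weightBelow a w y := by
  classical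
  have hle : ∀ j, {j | a j < a i}.indicator w j + Pi.single (M := fun _ => ℝ) i (w i) j ≤
      {j | a j < y}.indicator w j := by
    intro j
    rcases eq_or_ne j i with rfl | hji
    · simp [h]
    · rw [Pi.single_eq_of_ne hji, add_zero]
      exact indicator_le_indicator_of_subset (fun _ hk => lt_trans hk h) hw0 j
  have hsum := ((hw.indicator _).add (hasSum_pi_single i (w i)).summable).tsum_le_tsum hle
    (hw.indicator _)
  rwa [(hw.indicator _).tsum_add (hasSum_pi_single i (w i)).summable, tsum_pi_single] at hsum

lemma continuousAt_weightBelow (hw : Summable w) {c : ℝ} (hc : ∀ i, a i ≠ c) :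
    ContinuousAt (weightBelow a w) c := by
  refine tendsto_tsum_of_dominated_convergence hw.norm (fun i => ?_)
    (Eventually.of_forall fun _ i => norm_indicator_le_norm_self w i)
  refine tendsto_nhds_of_eventually_eq ?_
  rcases (hc i).lt_or_gt with hlt | hgt
  · filter_upwards [eventually_gt_nhds hlt] with x hx
    simp [hx, hlt]
  · filter_upwards [eventually_lt_nhds hgt] with x hx
    simp [hx.le.not_gt, hgt.le.not_gt]

end WeightBelow

section Staircase

variable {ι : Type*} (a : ι → I) (w : ι → ℝ)

noncomputable def jumpFun (x : ℝ) : ℝ :=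
  (x + weightBelow (fun i => (a i : ℝ)) w x) / (1 + ∑' i, w i)

noncomputable def staircase (t : I) : I :=
  sSup {x : I | jumpFun a w x ≤ t}

variable {a w}

lemma one_add_tsum_pos (hw0 : 0 ≤ w) : 0 < 1 + ∑' i, w i := by
  linarith [show 0 ≤ ∑' i, w i from tsum_nonneg hw0]

lemma strictMono_jumpFun (hw : Summable w) (hw0 : 0 ≤ w) : StrictMono (jumpFun a w) :=
  fun _ _ hxy => div_lt_div_of_pos_right
    (add_lt_add_of_lt_of_le hxy (monotone_weightBelow hw hw0 hxy.le)) (one_add_tsum_pos hw0)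

lemma jumpFun_zero : jumpFun a w 0 = 0 := by
  simp [jumpFun, weightBelow_eq_zero fun i => (a i).2.1]

lemma jumpFun_le_one (hw : Summable w) (hw0 : 0 ≤ w) {x : ℝ} (hx : x ≤ 1) :
    jumpFun a w x ≤ 1 :=
  div_le_one_of_le₀ (add_le_add hx (weightBelow_le_tsum hw hw0 x)) (one_add_tsum_pos hw0).le

lemma one_lt_jumpFun (hw0 : 0 ≤ w) {x : ℝ} (hx : 1 < x) : 1 < jumpFun a w x := by
  rw [jumpFun, weightBelow_eq_tsum fun i => (a i).2.2.trans_lt hx,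
    one_lt_div (one_add_tsum_pos hw0)]
  linarith

lemma jumpFun_mem (hw : Summable w) (hw0 : 0 ≤ w) (x : I) : jumpFun a w x ∈ I :=
  ⟨jumpFun_zero (a := a) (w := w) ▸ (strictMono_jumpFun hw hw0).monotone x.2.1,
    jumpFun_le_one hw hw0 x.2.2⟩

lemma continuousAt_jumpFun (hw : Summable w) {c : ℝ} (hc : ∀ i, (a i : ℝ) ≠ c) :
    ContinuousAt (jumpFun a w) c :=
  (continuousAt_id.add (continuousAt_weightBelow hw hc)).div_const _

lemma jumpFun_add_lt (hw : Summable w) (hw0 : 0 ≤ w) {i : ι} {y : ℝ} (h : (a i : ℝ) < y) :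
    jumpFun a w (a i) + w i / (1 + ∑' j, w j) < jumpFun a w y := by
  rw [jumpFun, jumpFun, ← add_div]
  refine div_lt_div_of_pos_right ?_ (one_add_tsum_pos hw0)
  linarith [weightBelow_add_le (a := fun j => (a j : ℝ)) hw hw0 h]

lemma le_staircase {x t : I} (h : jumpFun a w x ≤ t) : x ≤ staircase a w t :=
  le_sSup h

lemma staircase_le {x t : I} (h : ∀ y : I, x < y → (t : ℝ) < jumpFun a w y) :
    staircase a w t ≤ x :=
  sSup_le fun y hy => not_lt.1 fun hxy => (h y hxy).not_ge hy

variable (a w) in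
lemma monotone_staircase : Monotone (staircase a w) :=
  fun _ _ hst => sSup_le_sSup fun _ hx => le_trans (α := ℝ) hx hst

lemma staircase_jumpFun (hw : Summable w) (hw0 : 0 ≤ w) (x : I) :
    staircase a w ⟨jumpFun a w x, jumpFun_mem hw hw0 x⟩ = x :=
  le_antisymm (staircase_le fun _ hxy => strictMono_jumpFun hw hw0 hxy) (le_staircase le_rfl)

lemma isRepar_staircase (hw : Summable w) (hw0 : 0 ≤ w) : IsRepar (staircase a w) := by
  have hsurj : Function.Surjective (staircase a w) :=
    fun x => ⟨_, staircase_jumpFun hw hw0 x⟩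
  refine ⟨(monotone_staircase a w).continuous_of_surjective hsurj, monotone_staircase a w,
    le_antisymm (staircase_le fun y hy => ?_) nonneg', le_antisymm le_one' (le_staircase ?_)⟩
  · simpa [jumpFun_zero] using strictMono_jumpFun (a := a) hw hw0 hy
  · exact jumpFun_le_one hw hw0 le_rfl

lemma exists_lt_staircase_eq (hw : Summable w) (hw0 : 0 ≤ w) {i : ι} (hi : 0 < w i) :
    ∃ s t, s < t ∧ staircase a w s = a i ∧ staircase a w t = a i := by
  set W := 1 + ∑' j, w j
  have hW : 0 < W := one_add_tsum_pos hw0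
  have hstep : 0 < w i / W := div_pos hi hW
  have ht : jumpFun a w (a i) + w i / W ∈ I := by
    refine ⟨by linarith [(jumpFun_mem (a := a) hw hw0 (a i)).1], ?_⟩
    have hS := (weightBelow_add_le (a := fun j => (a j : ℝ)) hw hw0
      (show (a i : ℝ) < 2 by linarith [(a i).2.2])).trans (weightBelow_le_tsum hw hw0 2)
    rw [jumpFun, ← add_div]
    exact div_le_one_of_le₀ (by linarith [(a i).2.2]) hW.le
  refine ⟨⟨jumpFun a w (a i), jumpFun_mem hw hw0 (a i)⟩, ⟨_, ht⟩,
    Subtype.mk_lt_mk.2 (lt_add_of_pos_right _ hstep), staircase_jumpFun hw hw0 (a i), ?_⟩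
  exact le_antisymm (staircase_le fun y hy => jumpFun_add_lt hw hw0 hy)
    (le_staircase (le_add_of_nonneg_right hstep.le))

lemma mem_range_of_staircase_eq (hw : Summable w) (hw0 : 0 ≤ w) {s t c : I} (hst : s < t)
    (hs : staircase a w s = c) (ht : staircase a w t = c) : c ∈ range a := by
  by_contra hc
  have hcont : ContinuousAt (jumpFun a w) c :=
    continuousAt_jumpFun hw fun i h => hc ⟨i, Subtype.ext h⟩
  have hleft : ∀ x < (c : ℝ), jumpFun a w x ≤ s := by
    intro x hx
    by_contra! hsx
    rcases lt_or_ge x 0 with hx0 | hx0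
    · have := strictMono_jumpFun (a := a) hw hw0 hx0
      rw [jumpFun_zero] at this
      linarith [s.2.1]
    · have := hs ▸ staircase_le (x := ⟨x, hx0, hx.le.trans c.2.2⟩)
        fun y hy => hsx.trans (strictMono_jumpFun hw hw0 hy)
      exact this.not_gt hx
  have hright : ∀ x > (c : ℝ), (t : ℝ) ≤ jumpFun a w x := by
    intro x hx
    by_contra! hxt
    rcases le_or_gt x 1 with hx1 | hx1
    · have := ht ▸ le_staircase (x := ⟨x, c.2.1.trans hx.le, hx1⟩) hxt.le
      exact this.not_gt hx
    · linarith [one_lt_jumpFun (a := a) hw0 hx1, t.2.2]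
  have h₁ : jumpFun a w c ≤ s :=
    le_of_tendsto (hcont.mono_left nhdsWithin_le_nhds) (eventually_nhdsWithin_of_forall (s := Iio _) hleft)
  have h₂ : (t : ℝ) ≤ jumpFun a w c :=
    ge_of_tendsto (hcont.mono_left nhdsWithin_le_nhds) (eventually_nhdsWithin_of_forall (s := Ioi _) hright)
  exact hst.not_ge (h₂.trans h₁)

end Staircase

/-- Every countable subset `C ⊆ I` is realized as the set of stop values
of some reparametrization `φ` of the unit interval. -/
theorem exists_repar_with_stopValues
    (C : Set I) (hC : C.Countable) :
    ∃ φ : I → I, IsRepar φ ∧ StopValues φ = C := by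
  obtain ⟨w, hw_pos, _, hsum, -⟩ := hC.exists_pos_hasSum_le one_pos
  have hw0 : 0 ≤ fun c : C => w c := fun c => (hw_pos c).le
  have hrepar := isRepar_staircase (a := Subtype.val) hsum.summable hw0
  refine ⟨staircase Subtype.val fun c : C => w c, hrepar, ?_⟩
  rw [stopValues_eq_of_continuous_of_monotone hrepar.1 hrepar.2.1]
  ext c
  constructor
  · rintro ⟨s, t, hst, hs, ht⟩
    simpa using mem_range_of_staircase_eq hsum.summable hw0 hst hs ht
  · exact fun hc => exists_lt_staircase_eq (a := Subtype.val) hsum.summable hw0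
      (i := ⟨c, hc⟩) (hw_pos c)
end

section
/- Let φ, ψ : I → I be reparametrizations. Then the set of stop values of the composition φ ∘ ψ satisfies C_{φ∘ψ} = φ(C_ψ) ∪ C_φ. -/
open unitInterval

/-- For a monotone continuous self-map of `I`, the stop values are exactly
the values whose fiber is nondegenerate. -/
lemma stopValues_of_monotone (f : I → I) (hc : Continuous f) (hm : Monotone f) :
    StopValues f = {c | ∃ a b : I, a < b ∧ f a = c ∧ f b = c} := by
  ext c
  simp only [StopValues, Set.mem_setOf_eq]
  constructor
  · rintro ⟨a, b, ⟨hab, hconst, _⟩, rfl⟩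
    exact ⟨a, b, hab, rfl,
      hconst b ⟨hab.le, le_refl b⟩ a ⟨le_refl a, hab.le⟩⟩
  · rintro ⟨a, b, hab, ha, hb⟩
    have hS : IsClosed {t : I | f t = c} := isClosed_eq hc continuous_const
    obtain ⟨A, hAS, hAle⟩ := hS.isCompact.exists_isLeast ⟨a, ha⟩
    obtain ⟨B, hBS, hBge⟩ := hS.isCompact.exists_isGreatest ⟨a, ha⟩
    have hfiber : ∀ s, A ≤ s → s ≤ B → f s = c := by
      intro s h1 h2
      have := hm h1
      have := hm h2
      rw [hAS] at *
      rw [hBS] at *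
      exact le_antisymm ‹f s ≤ c› ‹c ≤ f s›
    refine ⟨A, B, ⟨?_, ?_, ?_⟩, hAS⟩
    · exact lt_of_le_of_lt (hAle ha) (lt_of_lt_of_le hab (hBge hb))
    · intro s hs t ht
      rw [hfiber s hs.1 hs.2, hfiber t ht.1 ht.2]
    · intro a' b' ha' hb' hconst
      have hAB : A ≤ B := (hAle ha).trans (hab.le.trans (hBge hb))
      have h1 : f a' = c := by
        rw [hconst a' ⟨le_refl _, ha'.trans (hAB.trans hb')⟩ A ⟨ha', hAB.trans hb'⟩, hAS]
      have h2 : f b' = c := by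
        rw [hconst b' ⟨(ha'.trans hAB).trans hb', le_refl _⟩ B ⟨ha'.trans hAB, hb'⟩, hBS]
      exact ⟨le_antisymm ha' (hAle h1), le_antisymm (hBge h2) hb'⟩

/-- A reparametrization is surjective. -/
lemma surj_of_repar (ψ : I → I) (h : IsRepar ψ) : Function.Surjective ψ := by
  intro x
  have h2 := intermediate_value_univ (0 : I) 1 h.1
  rw [h.2.2.1, h.2.2.2] at h2
  exact h2 ⟨nonneg', le_one'⟩

/-- For reparametrizations `φ, ψ` of `I`, the set of stop values of the
composition satisfies `C_{φ∘ψ} = φ(C_ψ) ∪ C_φ`. -/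
theorem stopValues_comp
    (φ ψ : I → I) (hφ : IsRepar φ) (hψ : IsRepar ψ) :
    StopValues (φ ∘ ψ) = φ '' StopValues ψ ∪ StopValues φ := by
  obtain ⟨hφc, hφm, -, -⟩ := hφ
  obtain ⟨hψc, hψm, -, -⟩ := id hψ
  rw [stopValues_of_monotone _ (hφc.comp hψc) (hφm.comp hψm),
    stopValues_of_monotone φ hφc hφm, stopValues_of_monotone ψ hψc hψm]
  ext c
  simp only [Set.mem_union, Set.mem_image, Set.mem_setOf_eq, Function.comp_apply]
  constructor
  · rintro ⟨a, b, hab, ha, hb⟩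
    by_cases h : ψ a = ψ b
    · exact Or.inl ⟨ψ a, ⟨a, b, hab, rfl, h.symm⟩, ha⟩
    · exact Or.inr ⟨ψ a, ψ b, lt_of_le_of_ne (hψm hab.le) h, ha, hb⟩
  · rintro (⟨x, ⟨a, b, hab, ha, hb⟩, rfl⟩ | ⟨x, y, hxy, hx, hy⟩)
    · exact ⟨a, b, hab, by rw [ha], by rw [hb]⟩
    · obtain ⟨s, hs⟩ := surj_of_repar ψ hψ x
      obtain ⟨t, ht⟩ := surj_of_repar ψ hψ y
      have hst : s < t := by
        by_contra hle
        push_neg at hle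
        exact absurd (hs ▸ ht ▸ hψm hle) (not_le.mpr hxy)
      exact ⟨s, t, hst, by rw [hs, hx], by rw [ht, hy]⟩
end

section
/- Let η, φ : I → I be reparametrizations. There exists a reparametrization ψ : I → I with η = φ ∘ ψ if and only if C_φ ⊆ C_η, where C_φ and C_η denote the sets of stop values of φ and η. -/
open unitInterval

/-!
Every fibre `p⁻¹{c}` of a reparametrization `p` is a nonempty closed interval, and `c` is a
stop value exactly when this interval is nondegenerate. If `η = φ ∘ ψ`, the surjective monotone
`ψ` maps the `η`-fibre of `c` onto the `φ`-fibre of `c`, so a nondegenerate `φ`-fibre forces a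
nondegenerate `η`-fibre. Conversely, if `C_φ ⊆ C_η`, map each `η`-fibre affinely onto the
corresponding `φ`-fibre: the result is monotone and surjective, hence a reparametrization.
-/

open Set Function

noncomputable section

section Rescale

variable {a b c d : ℝ}

/-- The affine map sending `[a, b]` onto `[c, d]`. For `a = b` it is the constant `c`
(as `x / 0 = 0`), so degenerate fibres need no case split below. -/
def rescale (a b c d t : ℝ) : ℝ := c + (t - a) / (b - a) * (d - c)

lemma rescale_mem_Icc {t : ℝ} (ht : t ∈ Icc a b) (hcd : c ≤ d) :
    rescale a b c d t ∈ Icc c d := by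
  obtain ⟨hat, htb⟩ := ht
  have h₀ : 0 ≤ (t - a) / (b - a) := div_nonneg (by linarith) (by linarith)
  have h₁ : (t - a) / (b - a) ≤ 1 := div_le_one_of_le₀ (by linarith) (by linarith)
  constructor <;> unfold rescale <;> nlinarith

lemma rescale_monotone (hab : a ≤ b) (hcd : c ≤ d) : Monotone (rescale a b c d) := by
  intro s t hst
  have := sub_nonneg.2 hab
  have := sub_nonneg.2 hcd
  unfold rescale
  gcongr

lemma rescale_rescale (hab : a < b) (hcd : c < d) (s : ℝ) :
    rescale a b c d (rescale c d a b s) = s := by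
  have := sub_ne_zero.2 hab.ne'
  have := sub_ne_zero.2 hcd.ne'
  unfold rescale
  field_simp
  ring

end Rescale

def fiberMin (p : I → I) (c : I) : I := sInf (p ⁻¹' {c})

def fiberMax (p : I → I) (c : I) : I := sSup (p ⁻¹' {c})

section Fiber

variable {p : I → I} {c s : I}

lemma fiberMin_le (h : p s = c) : fiberMin p c ≤ s := sInf_le h

lemma le_fiberMax (h : p s = c) : s ≤ fiberMax p c := le_sSup h

namespace IsRepar

lemma surjective (hp : IsRepar p) : Surjective p := fun y =>
  intermediate_value_univ 0 1 hp.1 (by rw [hp.2.2.1, hp.2.2.2]; exact y.2)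

lemma of_monotone_of_surjective (hm : Monotone p) (hs : Surjective p) : IsRepar p := by
  obtain ⟨t₀, ht₀⟩ := hs 0
  obtain ⟨t₁, ht₁⟩ := hs 1
  refine ⟨hm.continuous_of_surjective hs, hm, ?_, ?_⟩
  · have h := hm (nonneg' : 0 ≤ t₀)
    rw [ht₀] at h
    exact le_antisymm h nonneg'
  · have h := hm (le_one' : t₁ ≤ 1)
    rw [ht₁] at h
    exact le_antisymm le_one' h

lemma comp {ψ : I → I} (hp : IsRepar p) (hψ : IsRepar ψ) : IsRepar (p ∘ ψ) :=
  ⟨hp.1.comp hψ.1, hp.2.1.comp hψ.2.1, by simp [hψ.2.2.1, hp.2.2.1],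
    by simp [hψ.2.2.2, hp.2.2.2]⟩

variable (hp : IsRepar p)
include hp

lemma apply_fiberMin (c : I) : p (fiberMin p c) = c :=
  (isClosed_eq hp.1 continuous_const).sInf_mem (hp.surjective c)

lemma apply_fiberMax (c : I) : p (fiberMax p c) = c :=
  (isClosed_eq hp.1 continuous_const).sSup_mem (hp.surjective c)

lemma fiberMin_le_fiberMax (c : I) : fiberMin p c ≤ fiberMax p c :=
  fiberMin_le (hp.apply_fiberMax c)

lemma apply_eq_iff : p s = c ↔ s ∈ Icc (fiberMin p c) (fiberMax p c) := by
  refine ⟨fun h => ⟨fiberMin_le h, le_fiberMax h⟩, fun ⟨h₁, h₂⟩ => ?_⟩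
  apply le_antisymm
  · simpa only [hp.apply_fiberMax] using hp.2.1 h₂
  · simpa only [hp.apply_fiberMin] using hp.2.1 h₁

lemma fiberMax_lt_fiberMin {c' : I} (h : c < c') : fiberMax p c < fiberMin p c' :=
  hp.2.1.reflect_lt (by rwa [hp.apply_fiberMax, hp.apply_fiberMin])

lemma mem_stopValues_iff : c ∈ StopValues p ↔ fiberMin p c < fiberMax p c := by
  constructor
  · rintro ⟨a, b, ⟨hab, hconst, -⟩, rfl⟩
    have hb : p b = p a := hconst b ⟨hab.le, le_rfl⟩ a ⟨le_rfl, hab.le⟩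
    exact (fiberMin_le rfl).trans_lt (hab.trans_le (le_fiberMax hb))
  · intro h
    refine ⟨fiberMin p c, fiberMax p c, ⟨h, ?_, ?_⟩, hp.apply_fiberMin c⟩
    · intro s hs t ht
      rw [hp.apply_eq_iff.2 hs, hp.apply_eq_iff.2 ht]
    · intro a' b' ha' hb' hconst
      have hab' : a' ≤ b' := ha'.trans (h.le.trans hb')
      have hpa : p a' = c := by
        rw [hconst a' ⟨le_rfl, hab'⟩ (fiberMin p c) ⟨ha', h.le.trans hb'⟩,
          hp.apply_fiberMin]
      have hpb : p b' = c := by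
        rw [hconst b' ⟨hab', le_rfl⟩ (fiberMax p c) ⟨ha'.trans h.le, hb'⟩,
          hp.apply_fiberMax]
      exact ⟨le_antisymm ha' (fiberMin_le hpa), le_antisymm (le_fiberMax hpb) hb'⟩

end IsRepar

end Fiber

lemma IsRepar.stopValues_subset_comp {φ ψ : I → I} (hφ : IsRepar φ) (hψ : IsRepar ψ) :
    StopValues φ ⊆ StopValues (φ ∘ ψ) := by
  intro c hc
  rw [hφ.mem_stopValues_iff] at hc
  rw [(hφ.comp hψ).mem_stopValues_iff]
  obtain ⟨t₁, ht₁⟩ := hψ.surjective (fiberMin φ c)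
  obtain ⟨t₂, ht₂⟩ := hψ.surjective (fiberMax φ c)
  have h₁ : (φ ∘ ψ) t₁ = c := by rw [comp_apply, ht₁, hφ.apply_fiberMin]
  have h₂ : (φ ∘ ψ) t₂ = c := by rw [comp_apply, ht₂, hφ.apply_fiberMax]
  have ht : t₁ < t₂ := hψ.2.1.reflect_lt (ht₁ ▸ ht₂ ▸ hc)
  exact (fiberMin_le h₁).trans_lt (ht.trans_le (le_fiberMax h₂))

def fiberRescale (η φ : I → I) (c : I) : ℝ → ℝ :=
  rescale (fiberMin η c) (fiberMax η c) (fiberMin φ c) (fiberMax φ c)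

def rightFactor (η φ : I → I) (t : I) : I :=
  projIcc 0 1 zero_le_one (fiberRescale η φ (η t) t)

section RightFactor

variable {η φ : I → I}

lemma fiberRescale_mem_Icc (hφ : IsRepar φ) (t : I) :
    fiberRescale η φ (η t) t ∈ Icc (fiberMin φ (η t) : ℝ) (fiberMax φ (η t)) :=
  rescale_mem_Icc ⟨fiberMin_le (s := t) rfl, le_fiberMax (s := t) rfl⟩
    (hφ.fiberMin_le_fiberMax (η t))

lemma coe_rightFactor (hφ : IsRepar φ) (t : I) :
    (rightFactor η φ t : ℝ) = fiberRescale η φ (η t) t := by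
  obtain ⟨h₁, h₂⟩ := fiberRescale_mem_Icc hφ t
  rw [rightFactor,
    projIcc_of_mem _ ⟨(fiberMin φ (η t)).2.1.trans h₁, h₂.trans (fiberMax φ (η t)).2.2⟩]

lemma rightFactor_mem_fiber (hφ : IsRepar φ) (t : I) :
    rightFactor η φ t ∈ Icc (fiberMin φ (η t)) (fiberMax φ (η t)) := by
  rw [mem_Icc, ← Subtype.coe_le_coe, ← Subtype.coe_le_coe, coe_rightFactor hφ]
  exact fiberRescale_mem_Icc hφ t

lemma comp_rightFactor (hφ : IsRepar φ) : φ ∘ rightFactor η φ = η :=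
  funext fun t => hφ.apply_eq_iff.2 (rightFactor_mem_fiber hφ t)

lemma monotone_rightFactor (hη : IsRepar η) (hφ : IsRepar φ) :
    Monotone (rightFactor η φ) := by
  intro s t hst
  rcases (hη.2.1 hst).eq_or_lt with h | h
  · rw [rightFactor, rightFactor, h]
    exact monotone_projIcc _ (rescale_monotone (hη.fiberMin_le_fiberMax _)
      (hφ.fiberMin_le_fiberMax _) hst)
  · exact ((rightFactor_mem_fiber hφ s).2.trans_lt (hφ.fiberMax_lt_fiberMin h)).le.trans
      (rightFactor_mem_fiber hφ t).1

lemma surjective_rightFactor (hη : IsRepar η) (hφ : IsRepar φ)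
    (hsub : StopValues φ ⊆ StopValues η) : Surjective (rightFactor η φ) := by
  intro s
  set c := φ s
  rcases (hφ.fiberMin_le_fiberMax c).lt_or_eq with hφc | hφc
  · have hηc := hη.mem_stopValues_iff.1 (hsub (hφ.mem_stopValues_iff.2 hφc))
    have hs : (s : ℝ) ∈ Icc (fiberMin φ c : ℝ) (fiberMax φ c) :=
      ⟨fiberMin_le (s := s) rfl, le_fiberMax (s := s) rfl⟩
    obtain ⟨hu₁, hu₂⟩ := rescale_mem_Icc hs (hη.fiberMin_le_fiberMax c)
    set t : I := ⟨_, (fiberMin η c).2.1.trans hu₁, hu₂.trans (fiberMax η c).2.2⟩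
    have ht : η t = c := hη.apply_eq_iff.2 ⟨hu₁, hu₂⟩
    refine ⟨t, Subtype.ext ?_⟩
    rw [coe_rightFactor hφ, ht]
    exact rescale_rescale hηc hφc s
  · refine ⟨fiberMin η c, ?_⟩
    have h := rightFactor_mem_fiber (η := η) hφ (fiberMin η c)
    rw [hη.apply_fiberMin, ← hφc, Icc_self] at h
    have hs : s ∈ Icc (fiberMin φ c) (fiberMax φ c) := hφ.apply_eq_iff.1 rfl
    rw [← hφc, Icc_self] at hs
    exact h.trans hs.symm

lemma isRepar_rightFactor (hη : IsRepar η) (hφ : IsRepar φ)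
    (hsub : StopValues φ ⊆ StopValues η) : IsRepar (rightFactor η φ) :=
  .of_monotone_of_surjective (monotone_rightFactor hη hφ) (surjective_rightFactor hη hφ hsub)

end RightFactor

/-- Factorization on the right: for reparametrizations `η, φ`, there is a
reparametrization `ψ` with `η = φ ∘ ψ` if and only if `C_φ ⊆ C_η`. -/
theorem exists_right_factor_iff_stopValues_subset
    (η φ : I → I) (hη : IsRepar η) (hφ : IsRepar φ) :
    (∃ ψ : I → I, IsRepar ψ ∧ η = φ ∘ ψ) ↔ StopValues φ ⊆ StopValues η := by
  constructor
  · rintro ⟨ψ, hψ, rfl⟩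
    exact hφ.stopValues_subset_comp hψ
  · intro hsub
    exact ⟨rightFactor η φ, isRepar_rightFactor hη hφ hsub, (comp_rightFactor hφ).symm⟩
end
end

section
/- Let η, φ : I → I be reparametrizations. There exists a reparametrization ψ : I → I with η = ψ ∘ φ if and only if every φ-stop interval is contained in some η-stop interval (i.e., Δ_φ refines Δ_η). Moreover, when it exists, the factor ψ is uniquely determined. -/
open unitInterval

lemma repar_surj {φ : I → I} (hφ : IsRepar φ) : Function.Surjective φ := by
  letI : Fact ((0:ℝ) ≤ 1) := ⟨zero_le_one⟩
  intro t
  have h := intermediate_value_Icc (α := I) (nonneg' : (0:I) ≤ 1) hφ.1.continuousOn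
  rw [hφ.2.2.1, hφ.2.2.2] at h
  obtain ⟨s, _, hs⟩ := h ⟨nonneg', le_one'⟩
  exact ⟨s, hs⟩

/-- Any nondegenerate interval of constancy of a continuous monotone map
extends to a stop interval. -/
lemma extend_to_stop {p : I → I} (hc : Continuous p) (hm : Monotone p)
    {a b : I} (hab : a < b) (heq : p a = p b) :
    ∃ a' b' : I, IsStopInterval p a' b' ∧ a' ≤ a ∧ b ≤ b' := by
  letI : Fact ((0:ℝ) ≤ 1) := ⟨zero_le_one⟩
  set F : Set I := p ⁻¹' {p a} with hF
  have hFcomp : IsCompact F := (isClosed_singleton.preimage hc).isCompact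
  have haF : a ∈ F := rfl
  have hbF : b ∈ F := by simp [hF, heq.symm]
  have hFne : F.Nonempty := ⟨a, haF⟩
  have hinf : sInf F ∈ F := hFcomp.sInf_mem hFne
  have hsup : sSup F ∈ F := hFcomp.sSup_mem hFne
  set a' := sInf F with ha'
  set b' := sSup F with hb'
  have ha'a : a' ≤ a := sInf_le haF
  have hbb' : b ≤ b' := le_sSup hbF
  have hpa' : p a' = p a := hinf
  have hpb' : p b' = p a := hsup
  have ha'b' : a' < b' := lt_of_le_of_lt ha'a (lt_of_lt_of_le hab hbb')
  have hconst : ConstOn p a' b' := by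
    intro s hs t ht
    have h1 : ∀ x ∈ Set.Icc a' b', p x = p a := by
      intro x hx
      exact le_antisymm (hpb' ▸ hm hx.2) (hpa' ▸ hm hx.1)
    rw [h1 s hs, h1 t ht]
  refine ⟨a', b', ⟨ha'b', hconst, ?_⟩, ha'a, hbb'⟩
  intro a'' b'' ha'' hb'' hc''
  have ha'mem : a' ∈ Set.Icc a'' b'' := ⟨ha'', le_trans ha'b'.le hb''⟩
  have hb'mem : b' ∈ Set.Icc a'' b'' := ⟨le_trans ha'' ha'b'.le, hb''⟩
  have h1 : p a'' = p a := by
    rw [hc'' a'' ⟨le_refl _, le_trans ha'mem.1 ha'mem.2⟩ a' ha'mem, hpa']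
  have h2 : p b'' = p a := by
    rw [hc'' b'' ⟨le_trans hb'mem.1 hb'mem.2, le_refl _⟩ b' hb'mem, hpb']
  exact ⟨le_antisymm ha'' (sInf_le h1), le_antisymm (le_sSup h2) hb''⟩

/-- Factorization on the left: for reparametrizations `η, φ`, there is a
reparametrization `ψ` with `η = ψ ∘ φ` if and only if every `φ`-stop
interval is contained in some `η`-stop interval (`Δ_φ` refines `Δ_η`);
moreover such a factor `ψ`, when it exists, is unique. -/
theorem exists_left_factor_iff_stopIntervals_refine
    (η φ : I → I) (hη : IsRepar η) (hφ : IsRepar φ) :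
    ((∃ ψ : I → I, IsRepar ψ ∧ η = ψ ∘ φ) ↔
      ∀ a b : I, IsStopInterval φ a b →
        ∃ a' b' : I, IsStopInterval η a' b' ∧ Set.Icc a b ⊆ Set.Icc a' b') ∧
    (∀ ψ₁ ψ₂ : I → I, IsRepar ψ₁ → IsRepar ψ₂ →
      η = ψ₁ ∘ φ → η = ψ₂ ∘ φ → ψ₁ = ψ₂) := by
  have hφsurj := repar_surj hφ
  constructor
  · constructor
    · -- forward
      rintro ⟨ψ, hψ, hfac⟩ a b ⟨hab, hconst, _⟩
      have heq : η a = η b := by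
        have : φ a = φ b := hconst a ⟨le_refl _, hab.le⟩ b ⟨hab.le, le_refl _⟩
        simp [hfac, Function.comp, this]
      obtain ⟨a', b', hstop, h1, h2⟩ := extend_to_stop hη.1 hη.2.1 hab heq
      exact ⟨a', b', hstop, Set.Icc_subset_Icc h1 h2⟩
    · -- backward
      intro href
      -- key well-definedness
      have key : ∀ s₁ s₂ : I, φ s₁ = φ s₂ → η s₁ = η s₂ := by
        have key' : ∀ s₁ s₂ : I, s₁ ≤ s₂ → φ s₁ = φ s₂ → η s₁ = η s₂ := by
          intro s₁ s₂ hle heq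
          rcases eq_or_lt_of_le hle with rfl | hlt
          · rfl
          obtain ⟨a, b, hstop, h1, h2⟩ := extend_to_stop hφ.1 hφ.2.1 hlt heq
          obtain ⟨a', b', hstop', hsub⟩ := href a b hstop
          exact hstop'.2.1 s₁ (hsub ⟨h1, le_trans hlt.le h2⟩)
            s₂ (hsub ⟨le_trans h1 hlt.le, h2⟩)
        intro s₁ s₂ heq
        rcases le_total s₁ s₂ with h | h
        · exact key' s₁ s₂ h heq
        · exact (key' s₂ s₁ h heq.symm).symm
      choose sec hsec using hφsurj
      set ψ : I → I := fun t => η (sec t) with hψdef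
      have hcomp : η = ψ ∘ φ := by
        funext s
        exact (key s (sec (φ s)) (hsec (φ s)).symm)
      have hmono : Monotone ψ := by
        intro t₁ t₂ ht
        rcases le_total (sec t₁) (sec t₂) with h | h
        · exact hη.2.1 h
        · have : t₂ ≤ t₁ := by rw [← hsec t₁, ← hsec t₂]; exact hφ.2.1 h
          have ht12 : t₁ = t₂ := le_antisymm ht this
          exact le_of_eq (key _ _ (by rw [hsec, hsec, ht12]))
      have hsurj : Function.Surjective ψ := by
        intro t
        obtain ⟨s, hs⟩ := repar_surj hη t
        exact ⟨φ s, by rw [hcomp] at hs; exact hs⟩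
      have h0 : ψ 0 = 0 := by
        have := key (sec 0) 0 (by rw [hsec, hφ.2.2.1])
        rw [hψdef]; simp only []; rw [this, hη.2.2.1]
      have h1 : ψ 1 = 1 := by
        have := key (sec 1) 1 (by rw [hsec, hφ.2.2.2])
        rw [hψdef]; simp only []; rw [this, hη.2.2.2]
      exact ⟨ψ, ⟨hmono.continuous_of_surjective hsurj, hmono, h0, h1⟩, hcomp⟩
  · -- uniqueness
    intro ψ₁ ψ₂ _ _ h1 h2
    funext t
    obtain ⟨s, rfl⟩ := hφsurj t
    calc ψ₁ (φ s) = η s := by rw [h1]; rfl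
      _ = ψ₂ (φ s) := by rw [h2]; rfl
end

section
/- For every pair of reparametrizations φ₁, φ₂ : I → I there exist reparametrizations ψ₁, ψ₂ : I → I with φ₁ ∘ ψ₁ = φ₂ ∘ ψ₂ and such that the set of stop values of the common composition equals C_{φ₁} ∪ C_{φ₂}. -/
open unitInterval

namespace LCMRepar

open Set

/-- A "nice" real function: continuous monotone with `f 0 = 0`, `f 1 = 1`. -/
def Nice (f : ℝ → ℝ) : Prop :=
  Continuous f ∧ Monotone f ∧ f 0 = 0 ∧ f 1 = 1

/-- Real-valued extension of a self-map of `I`. -/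
noncomputable def ext (φ : I → I) : ℝ → ℝ :=
  fun s => (φ (projIcc 0 1 zero_le_one s) : ℝ)

lemma ext_coe (φ : I → I) (u : I) : ext φ ↑u = ↑(φ u) := by
  simp [ext, projIcc_val]

lemma ext_eq (φ : I → I) {s : ℝ} (hs : s ∈ Icc (0:ℝ) 1) :
    ext φ s = ↑(φ ⟨s, hs⟩) := by
  simp [ext, projIcc_of_mem zero_le_one hs]

lemma ext_nice {φ : I → I} (h : IsRepar φ) : Nice (ext φ) := by
  obtain ⟨hc, hm, h0, h1⟩ := h
  refine ⟨?_, ?_, ?_, ?_⟩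
  · exact continuous_subtype_val.comp (hc.comp continuous_projIcc)
  · exact fun s t hst => Subtype.coe_le_coe.2 (hm ((monotone_projIcc zero_le_one) hst))
  · have : (0:ℝ) ∈ Icc (0:ℝ) 1 := ⟨le_refl _, zero_le_one⟩
    rw [ext_eq φ this]
    have : (⟨0, this⟩ : I) = 0 := rfl
    rw [this, h0]; rfl
  · have h' : (1:ℝ) ∈ Icc (0:ℝ) 1 := ⟨zero_le_one, le_refl _⟩
    rw [ext_eq φ h']
    have : (⟨1, h'⟩ : I) = 1 := rfl
    rw [this, h1]; rfl

section Fibers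

variable {f : ℝ → ℝ}

/-- The fiber of `f` over `y`, restricted to `[0,1]`. -/
def fib (f : ℝ → ℝ) (y : ℝ) : Set ℝ := {s | s ∈ Icc (0:ℝ) 1 ∧ f s = y}

noncomputable def fa (f : ℝ → ℝ) (y : ℝ) : ℝ := sInf (fib f y)
noncomputable def fb (f : ℝ → ℝ) (y : ℝ) : ℝ := sSup (fib f y)

lemma fib_compact (hf : Nice f) (y : ℝ) : IsCompact (fib f y) := by
  have : fib f y = Icc (0:ℝ) 1 ∩ f ⁻¹' {y} := by
    ext s
    simp only [fib, Set.mem_setOf_eq, Set.mem_inter_iff, Set.mem_preimage,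
      Set.mem_singleton_iff]
  rw [this]
  exact isCompact_Icc.inter_right (isClosed_singleton.preimage hf.1)

lemma fib_nonempty (hf : Nice f) {y : ℝ} (hy : y ∈ Icc (0:ℝ) 1) :
    (fib f y).Nonempty := by
  have := intermediate_value_Icc (zero_le_one (α := ℝ)) hf.1.continuousOn
  rw [hf.2.2.1, hf.2.2.2] at this
  obtain ⟨s, hs, hfs⟩ := this hy
  exact ⟨s, hs, hfs⟩

lemma fa_mem (hf : Nice f) {y : ℝ} (hy : y ∈ Icc (0:ℝ) 1) : fa f y ∈ fib f y :=
  (fib_compact hf y).sInf_mem (fib_nonempty hf hy)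

lemma fb_mem (hf : Nice f) {y : ℝ} (hy : y ∈ Icc (0:ℝ) 1) : fb f y ∈ fib f y :=
  (fib_compact hf y).sSup_mem (fib_nonempty hf hy)

lemma fa_le (hf : Nice f) {y s : ℝ} (hs : s ∈ fib f y) : fa f y ≤ s :=
  csInf_le (fib_compact hf y).bddBelow hs

lemma le_fb (hf : Nice f) {y s : ℝ} (hs : s ∈ fib f y) : s ≤ fb f y :=
  le_csSup (fib_compact hf y).bddAbove hs

lemma fa_le_fb (hf : Nice f) {y : ℝ} (hy : y ∈ Icc (0:ℝ) 1) : fa f y ≤ fb f y :=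
  fa_le hf (fb_mem hf hy)

/-- The fiber is the full interval `[fa, fb]`. -/
lemma mem_fib_of_between (hf : Nice f) {y s : ℝ} (hy : y ∈ Icc (0:ℝ) 1)
    (h1 : fa f y ≤ s) (h2 : s ≤ fb f y) : s ∈ fib f y := by
  have ha := fa_mem hf hy
  have hb := fb_mem hf hy
  refine ⟨⟨le_trans ha.1.1 h1, le_trans h2 hb.1.2⟩, ?_⟩
  have h3 : f (fa f y) ≤ f s := hf.2.1 h1
  have h4 : f s ≤ f (fb f y) := hf.2.1 h2
  rw [ha.2] at h3; rw [hb.2] at h4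
  exact le_antisymm h4 h3

/-- Fibers over distinct values are strictly separated. -/
lemma fb_lt_fa (hf : Nice f) {y y' : ℝ} (hy : y ∈ Icc (0:ℝ) 1)
    (hy' : y' ∈ Icc (0:ℝ) 1) (h : y < y') : fb f y < fa f y' := by
  have hb := fb_mem hf hy
  have ha := fa_mem hf hy'
  by_contra hc
  push_neg at hc
  have := hf.2.1 hc
  rw [ha.2, hb.2] at this
  exact absurd this (not_le_of_gt h)

lemma fb_mono (hf : Nice f) {y y' : ℝ} (hy : y ∈ Icc (0:ℝ) 1)
    (hy' : y' ∈ Icc (0:ℝ) 1) (h : y ≤ y') : fb f y ≤ fb f y' := by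
  rcases eq_or_lt_of_le h with rfl | h
  · exact le_refl _
  · exact le_trans (le_of_lt (fb_lt_fa hf hy hy' h)) (fa_le_fb hf hy')

end Fibers

section Approx

variable {f g : ℝ → ℝ}

lemma fa_zero (hf : Nice f) : fa f 0 = 0 := by
  have h0 : (0:ℝ) ∈ fib f 0 := ⟨⟨le_refl _, zero_le_one⟩, hf.2.2.1⟩
  have h1 := fa_le hf h0
  have h2 := (fa_mem hf (⟨le_refl _, zero_le_one⟩ : (0:ℝ) ∈ Icc (0:ℝ) 1)).1.1
  linarith

lemma fb_one (hf : Nice f) : fb f 1 = 1 := by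
  have h0 : (1:ℝ) ∈ fib f 1 := ⟨⟨zero_le_one, le_refl _⟩, hf.2.2.2⟩
  have h1 := le_fb hf h0
  have h2 := (fb_mem hf (⟨zero_le_one, le_refl _⟩ : (1:ℝ) ∈ Icc (0:ℝ) 1)).1.2
  linarith

/-- Left approximation: below `y₀ > 0` there are fibers whose sup nearly reaches `fa f y₀`. -/
lemma exists_fb_near (hf : Nice f) {y₀ : ℝ} (hy₀ : y₀ ∈ Icc (0:ℝ) 1) (hpos : 0 < y₀)
    {ε : ℝ} (hε : 0 < ε) : ∃ y ∈ Ico (0:ℝ) y₀, fa f y₀ - ε ≤ fb f y := by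
  set a := fa f y₀ with ha_def
  have ha := fa_mem hf hy₀
  rcases le_or_gt a 0 with h0 | h0
  · refine ⟨y₀ / 2, ⟨le_of_lt (half_pos hpos), half_lt_self hpos⟩, ?_⟩
    have hy : y₀ / 2 ∈ Icc (0:ℝ) 1 := ⟨le_of_lt (half_pos hpos), le_trans (le_of_lt (half_lt_self hpos)) hy₀.2⟩
    have := (fb_mem hf hy).1.1
    linarith
  · set s := max 0 (a - ε) with hs_def
    have hs01 : s ∈ Icc (0:ℝ) 1 := ⟨le_max_left _ _,
      max_le (le_of_lt zero_lt_one) (by linarith [ha.1.2])⟩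
    have hsa : s < a := by
      rcases max_cases 0 (a - ε) with ⟨h, _⟩ | ⟨h, _⟩ <;> rw [hs_def, h] <;> linarith
    set y := f s with hy_def
    have hy01 : y ∈ Icc (0:ℝ) 1 := by
      constructor
      · rw [hy_def, ← hf.2.2.1]; exact hf.2.1 hs01.1
      · rw [hy_def, ← hf.2.2.2]; exact hf.2.1 hs01.2
    have hyy : y < y₀ := by
      have hle : y ≤ y₀ := by rw [hy_def, ← ha.2]; exact hf.2.1 (le_of_lt hsa)
      rcases eq_or_lt_of_le hle with heq | h; swap
      · exact h
      · exfalso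
        have : s ∈ fib f y₀ := ⟨hs01, by rw [← hy_def, heq]⟩
        exact absurd (fa_le hf this) (not_le_of_gt hsa)
    refine ⟨y, ⟨hy01.1, hyy⟩, ?_⟩
    have : s ∈ fib f y := ⟨hs01, rfl⟩
    have := le_fb hf this
    have : a - ε ≤ s := le_max_right _ _
    linarith [le_fb hf (⟨hs01, rfl⟩ : s ∈ fib f y)]

/-- Right approximation. -/
lemma exists_fa_near (hf : Nice f) {y₀ : ℝ} (hy₀ : y₀ ∈ Icc (0:ℝ) 1) (hlt : y₀ < 1)
    {ε : ℝ} (hε : 0 < ε) : ∃ y ∈ Ioc y₀ (1:ℝ), fa f y ≤ fb f y₀ + ε := by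
  set b := fb f y₀ with hb_def
  have hb := fb_mem hf hy₀
  rcases le_or_gt 1 b with h0 | h0
  · refine ⟨(y₀ + 1) / 2, ⟨by linarith, by linarith⟩, ?_⟩
    have hy : (y₀ + 1) / 2 ∈ Icc (0:ℝ) 1 := ⟨by linarith [hy₀.1], by linarith⟩
    have := (fa_mem hf hy).1.2
    linarith
  · set s := min 1 (b + ε) with hs_def
    have hs01 : s ∈ Icc (0:ℝ) 1 := ⟨le_min (le_of_lt zero_lt_one) (by linarith [hb.1.1]),
      min_le_left _ _⟩
    have hsb : b < s := by
      rcases min_cases 1 (b + ε) with ⟨h, _⟩ | ⟨h, _⟩ <;> rw [hs_def, h] <;> linarith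
    set y := f s with hy_def
    have hy01 : y ∈ Icc (0:ℝ) 1 := by
      constructor
      · rw [hy_def, ← hf.2.2.1]; exact hf.2.1 hs01.1
      · rw [hy_def, ← hf.2.2.2]; exact hf.2.1 hs01.2
    have hyy : y₀ < y := by
      have hle : y₀ ≤ y := by rw [hy_def, ← hb.2]; exact hf.2.1 (le_of_lt hsb)
      rcases eq_or_lt_of_le hle with heq | h; swap
      · exact h
      · exfalso
        have : s ∈ fib f y₀ := ⟨hs01, by rw [← hy_def, ← heq]⟩
        exact absurd (le_fb hf this) (not_le_of_gt hsb)
    refine ⟨y, ⟨hyy, hy01.2⟩, ?_⟩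
    have : fa f y ≤ s := fa_le hf (⟨hs01, rfl⟩ : s ∈ fib f y)
    have : s ≤ b + ε := min_le_right _ _
    linarith [fa_le hf (⟨hs01, rfl⟩ : s ∈ fib f y)]

/-- Combined left-continuity for sums of two fiber infima. -/
lemma faa_le_of_forall (hf : Nice f) (hg : Nice g) {y₀ c : ℝ}
    (hy₀ : y₀ ∈ Icc (0:ℝ) 1) (hc : 0 ≤ c)
    (h : ∀ y ∈ Ico (0:ℝ) y₀, fb f y + fb g y ≤ c) :
    fa f y₀ + fa g y₀ ≤ c := by
  rcases eq_or_lt_of_le hy₀.1 with heq | hpos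
  · rw [← heq, fa_zero hf, fa_zero hg]
    linarith
  · refine le_of_forall_pos_le_add (fun ε hε => ?_)
    obtain ⟨y₁, hy₁, h1⟩ := exists_fb_near hf hy₀ hpos (half_pos hε)
    obtain ⟨y₂, hy₂, h2⟩ := exists_fb_near hg hy₀ hpos (half_pos hε)
    set y := max y₁ y₂ with hy_def
    have hy : y ∈ Ico (0:ℝ) y₀ := ⟨le_max_of_le_left hy₁.1, max_lt hy₁.2 hy₂.2⟩
    have hy01 : y ∈ Icc (0:ℝ) 1 := ⟨hy.1, le_trans (le_of_lt hy.2) hy₀.2⟩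
    have hy1' : y₁ ∈ Icc (0:ℝ) 1 := ⟨hy₁.1, le_trans (le_of_lt hy₁.2) hy₀.2⟩
    have hy2' : y₂ ∈ Icc (0:ℝ) 1 := ⟨hy₂.1, le_trans (le_of_lt hy₂.2) hy₀.2⟩
    have b1 : fb f y₁ ≤ fb f y := fb_mono hf hy1' hy01 (le_max_left _ _)
    have b2 : fb g y₂ ≤ fb g y := fb_mono hg hy2' hy01 (le_max_right _ _)
    have := h y hy
    linarith

/-- Combined right-continuity for sums of two fiber suprema. -/
lemma fbb_ge_of_forall (hf : Nice f) (hg : Nice g) {y₀ c : ℝ}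
    (hy₀ : y₀ ∈ Icc (0:ℝ) 1) (hc : c ≤ 2)
    (h : ∀ y ∈ Ioc y₀ (1:ℝ), c ≤ fa f y + fa g y) :
    c ≤ fb f y₀ + fb g y₀ := by
  rcases eq_or_lt_of_le hy₀.2 with heq | hlt
  · rw [heq, fb_one hf, fb_one hg]; linarith
  · by_contra hcon
    push_neg at hcon
    have hε : 0 < (c - (fb f y₀ + fb g y₀)) / 4 := by linarith
    obtain ⟨y₁, hy₁, h1⟩ := exists_fa_near hf hy₀ hlt hε
    obtain ⟨y₂, hy₂, h2⟩ := exists_fa_near hg hy₀ hlt hε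
    set y := min y₁ y₂ with hy_def
    have hy : y ∈ Ioc y₀ (1:ℝ) := ⟨lt_min hy₁.1 hy₂.1, min_le_of_left_le hy₁.2⟩
    have hy01 : y ∈ Icc (0:ℝ) 1 := ⟨le_trans hy₀.1 (le_of_lt hy.1), hy.2⟩
    have hy1' : y₁ ∈ Icc (0:ℝ) 1 := ⟨le_trans hy₀.1 (le_of_lt hy₁.1), hy₁.2⟩
    have hy2' : y₂ ∈ Icc (0:ℝ) 1 := ⟨le_trans hy₀.1 (le_of_lt hy₂.1), hy₂.2⟩
    have a1 : fa f y ≤ fa f y₁ := by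
      rcases eq_or_lt_of_le (min_le_left y₁ y₂) with heq' | hlt'
      · rw [hy_def, heq']
      · exact le_trans (le_trans (fa_le_fb hf hy01) (le_of_lt (fb_lt_fa hf hy01 hy1' hlt'))) (le_refl _)
    have a2 : fa g y ≤ fa g y₂ := by
      rcases eq_or_lt_of_le (min_le_right y₁ y₂) with heq' | hlt'
      · rw [hy_def, heq']
      · exact le_trans (fa_le_fb hg hy01) (le_of_lt (fb_lt_fa hg hy01 hy2' hlt'))
    have := h y hy
    linarith

/-- Existence of a point of the staircase `K` on each antidiagonal. -/
lemma exists_antidiag (hf : Nice f) (hg : Nice g) {v : ℝ} (hv : v ∈ Icc (0:ℝ) 2) :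
    ∃ s t : ℝ, s ∈ Icc (0:ℝ) 1 ∧ t ∈ Icc (0:ℝ) 1 ∧ f s = g t ∧ s + t = v := by
  -- First reduce to finding y with fa+fa ≤ v ≤ fb+fb
  suffices hsuff : ∃ y ∈ Icc (0:ℝ) 1, fa f y + fa g y ≤ v ∧ v ≤ fb f y + fb g y by
    obtain ⟨y, hy, hav, hvb⟩ := hsuff
    set s := max (fa f y) (v - fb g y) with hs_def
    have hs : s ∈ fib f y := by
      apply mem_fib_of_between hf hy (le_max_left _ _)
      apply max_le (fa_le_fb hf hy)
      linarith
    set t := v - s with ht_def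
    have hts : t = min (v - fa f y) (fb g y) := by
      rw [ht_def, hs_def]
      rcases max_cases (fa f y) (v - fb g y) with ⟨h', h''⟩ | ⟨h', h''⟩ <;>
        rw [h'] <;> [rw [min_eq_left (by linarith)]; rw [min_eq_right (by linarith)]] <;> ring
    have ht : t ∈ fib g y := by
      rw [hts]
      apply mem_fib_of_between hg hy
      · exact le_min (by linarith) (fa_le_fb hg hy)
      · exact min_le_right _ _
    exact ⟨s, t, hs.1, ht.1, by rw [hs.2, ht.2], by rw [ht_def]; ring⟩
  -- Now find such y via the supremum
  set Y := {y : ℝ | y ∈ Icc (0:ℝ) 1 ∧ fa f y + fa g y ≤ v} with hY_def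
  have h0Y : (0:ℝ) ∈ Y := ⟨⟨le_refl _, zero_le_one⟩, by rw [fa_zero hf, fa_zero hg]; linarith [hv.1]⟩
  have hYne : Y.Nonempty := ⟨0, h0Y⟩
  have hYbdd : BddAbove Y := ⟨1, fun y hy => hy.1.2⟩
  set y₀ := sSup Y with hy₀_def
  have hy₀mem : y₀ ∈ Icc (0:ℝ) 1 :=
    ⟨le_csSup hYbdd h0Y, csSup_le hYne (fun y hy => hy.1.2)⟩
  refine ⟨y₀, hy₀mem, ?_, ?_⟩
  · apply faa_le_of_forall hf hg hy₀mem hv.1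
    intro y hy
    obtain ⟨y', hy'Y, hyy'⟩ := exists_lt_of_lt_csSup hYne hy.2
    have hy01 : y ∈ Icc (0:ℝ) 1 := ⟨hy.1, le_trans (le_of_lt hy.2) hy₀mem.2⟩
    have h1 : fb f y < fa f y' := fb_lt_fa hf hy01 hy'Y.1 hyy'
    have h2 : fb g y < fa g y' := fb_lt_fa hg hy01 hy'Y.1 hyy'
    linarith [hy'Y.2]
  · apply fbb_ge_of_forall hf hg hy₀mem hv.2
    intro y hy
    have : y ∉ Y := fun hmem => absurd (le_csSup hYbdd hmem) (not_le_of_gt hy.1)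
    have hy01 : y ∈ Icc (0:ℝ) 1 := ⟨le_trans hy₀mem.1 (le_of_lt hy.1), hy.2⟩
    by_contra hcon
    push_neg at hcon
    exact this ⟨hy01, le_of_lt hcon⟩

end Approx
section Psi

variable {f g : ℝ → ℝ}

/-- The slice of the staircase `{(s,t) : f s = g t}` on the antidiagonal `s + t = 2u`,
projected to the first coordinate. -/
def Kslice (f g : ℝ → ℝ) (u : ℝ) : Set ℝ :=
  {s | s ∈ Icc (0:ℝ) 1 ∧ (2*u - s) ∈ Icc (0:ℝ) 1 ∧ f s = g (2*u - s)}

noncomputable def psi (f g : ℝ → ℝ) (u : ℝ) : ℝ := sSup (Kslice f g u)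

lemma Kslice_compact (hf : Nice f) (hg : Nice g) (u : ℝ) : IsCompact (Kslice f g u) := by
  have heq : Kslice f g u = Icc (0:ℝ) 1 ∩ ((fun s => 2*u - s) ⁻¹' Icc (0:ℝ) 1 ∩
      {s | f s = g (2*u - s)}) := by
    ext s
    constructor
    · rintro ⟨h1, h2, h3⟩; exact ⟨h1, h2, h3⟩
    · rintro ⟨h1, h2, h3⟩; exact ⟨h1, h2, h3⟩
  rw [heq]
  apply isCompact_Icc.inter_right
  apply IsClosed.inter
  · exact isClosed_Icc.preimage (by continuity)
  · exact isClosed_eq hf.1 (hg.1.comp (by continuity))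

lemma Kslice_nonempty (hf : Nice f) (hg : Nice g) {u : ℝ} (hu : u ∈ Icc (0:ℝ) 1) :
    (Kslice f g u).Nonempty := by
  obtain ⟨s, t, hs, ht, hfg, hst⟩ := exists_antidiag hf hg
    (show 2*u ∈ Icc (0:ℝ) 2 from ⟨by linarith [hu.1], by linarith [hu.2]⟩)
  exact ⟨s, hs, by rw [show 2*u - s = t by linarith]; exact ⟨ht, hfg⟩⟩

lemma psi_mem (hf : Nice f) (hg : Nice g) {u : ℝ} (hu : u ∈ Icc (0:ℝ) 1) :
    psi f g u ∈ Kslice f g u :=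
  (Kslice_compact hf hg u).sSup_mem (Kslice_nonempty hf hg hu)

lemma le_psi (hf : Nice f) (hg : Nice g) {u s : ℝ} (hs : s ∈ Kslice f g u) :
    s ≤ psi f g u :=
  le_csSup (Kslice_compact hf hg u).bddAbove hs

/-- The value `y` of the staircase at `psi u`. -/
noncomputable def yval (f g : ℝ → ℝ) (u : ℝ) : ℝ := f (psi f g u)

lemma yval_mem (hf : Nice f) (hg : Nice g) {u : ℝ} (hu : u ∈ Icc (0:ℝ) 1) :
    yval f g u ∈ Icc (0:ℝ) 1 := by
  have hs := (psi_mem hf hg hu).1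
  exact ⟨by rw [yval, ← hf.2.2.1]; exact hf.2.1 hs.1,
    by rw [yval, ← hf.2.2.2]; exact hf.2.1 hs.2⟩

lemma psi_mem_fib (hf : Nice f) (hg : Nice g) {u : ℝ} (hu : u ∈ Icc (0:ℝ) 1) :
    psi f g u ∈ fib f (yval f g u) :=
  ⟨(psi_mem hf hg hu).1, rfl⟩

lemma psi_compl_mem_fib (hf : Nice f) (hg : Nice g) {u : ℝ} (hu : u ∈ Icc (0:ℝ) 1) :
    2*u - psi f g u ∈ fib g (yval f g u) :=
  ⟨(psi_mem hf hg hu).2.1, ((psi_mem hf hg hu).2.2).symm⟩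

/-- The key formula: `psi u = min (fb f y) (2u - fa g y)` where `y = yval u`. -/
lemma psi_formula (hf : Nice f) (hg : Nice g) {u : ℝ} (hu : u ∈ Icc (0:ℝ) 1) :
    psi f g u = min (fb f (yval f g u)) (2*u - fa g (yval f g u)) := by
  set y := yval f g u with hy_def
  have hy : y ∈ Icc (0:ℝ) 1 := yval_mem hf hg hu
  have hsf := psi_mem_fib hf hg hu
  have htf := psi_compl_mem_fib hf hg hu
  apply le_antisymm
  · exact le_min (le_fb hf hsf) (by linarith [fa_le hg htf])
  · -- the min is itself in the slice
    set s₀ := min (fb f y) (2*u - fa g y) with hs₀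
    have hs₀f : s₀ ∈ fib f y := by
      apply mem_fib_of_between hf hy
      · exact le_min (fa_le_fb hf hy) (by linarith [fa_le hf hsf, fa_le hg htf, le_fb hg htf])
      · exact min_le_left _ _
    have ht₀f : 2*u - s₀ ∈ fib g y := by
      apply mem_fib_of_between hg hy
      · rcases min_cases (fb f y) (2*u - fa g y) with ⟨h', _⟩ | ⟨h', _⟩ <;> rw [hs₀, h']
        · linarith [le_fb hf hsf, fa_le hg htf]
        · linarith
      · rcases min_cases (fb f y) (2*u - fa g y) with ⟨h', _⟩ | ⟨h', _⟩ <;> rw [hs₀, h']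
        · linarith [le_fb hf hsf, le_fb hg htf]
        · linarith [fa_le_fb hg hy, le_fb hg htf, le_fb hf hsf]
    apply le_psi hf hg
    exact ⟨hs₀f.1, ht₀f.1, by rw [hs₀f.2, ht₀f.2]⟩

/-- Double monotonicity: both `psi` and `2u - psi` are monotone on `[0,1]`. -/
lemma psi_mono (hf : Nice f) (hg : Nice g) {u u' : ℝ} (hu : u ∈ Icc (0:ℝ) 1)
    (hu' : u' ∈ Icc (0:ℝ) 1) (huu : u ≤ u') :
    psi f g u ≤ psi f g u' ∧ 2*u - psi f g u ≤ 2*u' - psi f g u' := by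
  set y := yval f g u with hy_def
  set y' := yval f g u' with hy'_def
  have hy : y ∈ Icc (0:ℝ) 1 := yval_mem hf hg hu
  have hy' : y' ∈ Icc (0:ℝ) 1 := yval_mem hf hg hu'
  have hsf := psi_mem_fib hf hg hu
  have hsf' := psi_mem_fib hf hg hu'
  have htf := psi_compl_mem_fib hf hg hu
  have htf' := psi_compl_mem_fib hf hg hu'
  rcases lt_trichotomy y y' with hlt | heq | hgt
  · constructor
    · linarith [le_fb hf hsf, fb_lt_fa hf hy hy' hlt, fa_le hf hsf']
    · linarith [le_fb hg htf, fb_lt_fa hg hy hy' hlt, fa_le hg htf']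
  · have h1 := psi_formula hf hg hu
    have h2 := psi_formula hf hg hu'
    rw [← hy_def] at h1; rw [← hy'_def, ← heq] at h2
    constructor
    · rw [h1, h2]
      exact min_le_min (le_refl _) (by linarith)
    · rw [h1, h2]
      rcases min_cases (fb f y) (2*u - fa g y) with ⟨ha, hb⟩ | ⟨ha, hb⟩ <;>
      rcases min_cases (fb f y) (2*u' - fa g y) with ⟨hc, hd⟩ | ⟨hc, hd⟩ <;>
        rw [ha, hc] <;> linarith
  · exfalso
    have h1 : psi f g u' < psi f g u := by
      linarith [le_fb hf hsf', fb_lt_fa hf hy' hy hgt, fa_le hf hsf]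
    have h2 : 2*u' - psi f g u' < 2*u - psi f g u := by
      linarith [le_fb hg htf', fb_lt_fa hg hy' hy hgt, fa_le hg htf]
    linarith

lemma psi_lipschitz (hf : Nice f) (hg : Nice g) {u u' : ℝ} (hu : u ∈ Icc (0:ℝ) 1)
    (hu' : u' ∈ Icc (0:ℝ) 1) : |psi f g u' - psi f g u| ≤ 2 * |u' - u| := by
  rcases le_total u u' with h | h
  · obtain ⟨h1, h2⟩ := psi_mono hf hg hu hu' h
    rw [abs_of_nonneg (by linarith), abs_of_nonneg (by linarith)]
    linarith
  · obtain ⟨h1, h2⟩ := psi_mono hf hg hu' hu h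
    rw [abs_of_nonpos (by linarith), abs_of_nonpos (by linarith)]
    linarith

lemma psi_zero (hf : Nice f) (hg : Nice g) : psi f g 0 = 0 := by
  have h0 : (0:ℝ) ∈ Kslice f g 0 := by
    refine ⟨⟨le_refl _, zero_le_one⟩, ?_, ?_⟩
    · norm_num
    · rw [show 2*(0:ℝ) - 0 = 0 by ring, hf.2.2.1, hg.2.2.1]
  have hmem := psi_mem hf hg (show (0:ℝ) ∈ Icc (0:ℝ) 1 from ⟨le_refl _, zero_le_one⟩)
  have h1 := hmem.1.1
  have h2 := hmem.2.1.1
  have := le_psi hf hg h0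
  linarith

lemma psi_one (hf : Nice f) (hg : Nice g) : psi f g 1 = 1 := by
  have h1 : (1:ℝ) ∈ Kslice f g 1 := by
    refine ⟨⟨zero_le_one, le_refl _⟩, ?_, ?_⟩
    · norm_num
    · rw [show 2*(1:ℝ) - 1 = 1 by ring, hf.2.2.2, hg.2.2.2]
  have hmem := psi_mem hf hg (show (1:ℝ) ∈ Icc (0:ℝ) 1 from ⟨zero_le_one, le_refl _⟩)
  have := le_psi hf hg h1
  have := hmem.1.2
  linarith

end Psi
section Assemble

/-- Intermediate value surjectivity helper. -/
lemma surj_on_Icc {h : ℝ → ℝ} (hcont : ContinuousOn h (Icc (0:ℝ) 1))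
    (h0 : h 0 = 0) (h1 : h 1 = 1) {w : ℝ} (hw : w ∈ Icc (0:ℝ) 1) :
    ∃ u ∈ Icc (0:ℝ) 1, h u = w := by
  have := intermediate_value_Icc (zero_le_one (α := ℝ)) hcont
  rw [h0, h1] at this
  obtain ⟨u, hu, hhu⟩ := this hw
  exact ⟨u, hu, hhu⟩

lemma lip_continuousOn {h : ℝ → ℝ}
    (hl : ∀ u ∈ Icc (0:ℝ) 1, ∀ u' ∈ Icc (0:ℝ) 1, |h u' - h u| ≤ 2 * |u' - u|) :
    ContinuousOn h (Icc (0:ℝ) 1) := by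
  rw [Metric.continuousOn_iff]
  intro b hb ε hε
  refine ⟨ε / 2, half_pos hε, fun a ha hab => ?_⟩
  rw [Real.dist_eq] at hab ⊢
  calc |h a - h b| ≤ 2 * |a - b| := hl b hb a ha
    _ < ε := by linarith

variable {φ₁ φ₂ : I → I}

/-- Characterization of stop values for monotone continuous maps `I → I`. -/
lemma stopValues_char {p : I → I} (hc : Continuous p) (hm : Monotone p) :
    StopValues p = {y | ∃ u v : I, u < v ∧ p u = y ∧ p v = y} := by
  ext y
  constructor
  · rintro ⟨a, b, ⟨hab, hconst, _⟩, rfl⟩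
    exact ⟨a, b, hab, rfl,
      hconst b ⟨le_of_lt hab, le_refl _⟩ a ⟨le_refl _, le_of_lt hab⟩⟩
  · rintro ⟨u, v, huv, hu, hv⟩
    set S : Set I := p ⁻¹' {y} with hS
    have hScl : IsClosed S := isClosed_singleton.preimage hc
    have hSne : S.Nonempty := ⟨u, hu⟩
    obtain ⟨a, haS, ha⟩ := hScl.isCompact.exists_isLeast hSne
    obtain ⟨b, hbS, hb⟩ := hScl.isCompact.exists_isGreatest hSne
    have hpa : p a = y := haS
    have hpb : p b = y := hbS
    have hau : a ≤ u := ha hu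
    have hvb : v ≤ b := hb hv
    have hab : a < b := lt_of_le_of_lt hau (lt_of_lt_of_le huv hvb)
    have hconst : ConstOn p a b := by
      intro s hs t ht
      have h1 : p s = y := le_antisymm (hpb ▸ hm hs.2) (hpa ▸ hm hs.1)
      have h2 : p t = y := le_antisymm (hpb ▸ hm ht.2) (hpa ▸ hm ht.1)
      rw [h1, h2]
    refine ⟨a, b, ⟨hab, hconst, ?_⟩, hpa⟩
    intro a' b' ha' hb' hconst'
    have ha'b' : a' ≤ b' := le_trans ha' (le_trans (le_of_lt hab) hb')
    have hpa' : p a' = y := by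
      rw [hconst' a' ⟨le_refl _, ha'b'⟩ a ⟨ha', le_trans (le_of_lt hab) hb'⟩, hpa]
    have hpb' : p b' = y := by
      rw [hconst' b' ⟨ha'b', le_refl _⟩ b ⟨le_trans ha' (le_of_lt hab), hb'⟩, hpb]
    exact ⟨le_antisymm ha' (ha hpa'), le_antisymm (hb hpb') hb'⟩

end Assemble

end LCMRepar

open LCMRepar Set in
/-- Every pair of reparametrizations `φ₁, φ₂` admits a "least common
multiple": there are reparametrizations `ψ₁, ψ₂` with
`φ₁ ∘ ψ₁ = φ₂ ∘ ψ₂`, the common composition having stop value set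
`C_{φ₁} ∪ C_{φ₂}`. -/
theorem exists_common_right_multiple
    (φ₁ φ₂ : I → I) (h₁ : IsRepar φ₁) (h₂ : IsRepar φ₂) :
    ∃ ψ₁ ψ₂ : I → I, IsRepar ψ₁ ∧ IsRepar ψ₂ ∧ φ₁ ∘ ψ₁ = φ₂ ∘ ψ₂ ∧
      StopValues (φ₁ ∘ ψ₁) = StopValues φ₁ ∪ StopValues φ₂ := by
  set f := ext φ₁ with hf_def
  set g := ext φ₂ with hg_def
  have hf : Nice f := ext_nice h₁
  have hg : Nice g := ext_nice h₂
  -- the two reparametrizations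
  set Ψ₁ : I → I := fun u => ⟨psi f g ↑u, (psi_mem hf hg u.2).1⟩ with hΨ₁
  set Ψ₂ : I → I := fun u => ⟨2 * ↑u - psi f g ↑u, (psi_mem hf hg u.2).2.1⟩ with hΨ₂
  -- continuity of the underlying real functions on I
  have hlip : ∀ u ∈ Icc (0:ℝ) 1, ∀ u' ∈ Icc (0:ℝ) 1,
      |psi f g u' - psi f g u| ≤ 2 * |u' - u| :=
    fun u hu u' hu' => psi_lipschitz hf hg hu hu'
  have hcont1 : Continuous fun u : I => psi f g ↑u := by
    rw [Metric.continuous_iff]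
    intro b ε hε
    refine ⟨ε / 2, half_pos hε, fun a hab => ?_⟩
    rw [Subtype.dist_eq, Real.dist_eq] at hab
    rw [Real.dist_eq]
    calc |psi f g ↑a - psi f g ↑b| ≤ 2 * |(a:ℝ) - ↑b| := hlip ↑b b.2 ↑a a.2
      _ < ε := by linarith
  have hΨ₁cont : Continuous Ψ₁ := Continuous.subtype_mk hcont1 _
  have hΨ₂cont : Continuous Ψ₂ := by
    apply Continuous.subtype_mk
    exact (continuous_const.mul continuous_subtype_val).sub hcont1
  have hΨ₁mono : Monotone Ψ₁ := fun u v huv =>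
    Subtype.mk_le_mk.2 (psi_mono hf hg u.2 v.2 huv).1
  have hΨ₂mono : Monotone Ψ₂ := fun u v huv =>
    Subtype.mk_le_mk.2 (psi_mono hf hg u.2 v.2 huv).2
  have hc0 : ((0 : I) : ℝ) = 0 := rfl
  have hc1 : ((1 : I) : ℝ) = 1 := rfl
  have hΨ₁0 : Ψ₁ 0 = 0 := Subtype.ext (by rw [hΨ₁]; simp only; rw [hc0, psi_zero hf hg])
  have hΨ₁1 : Ψ₁ 1 = 1 := Subtype.ext (by rw [hΨ₁]; simp only; rw [hc1, psi_one hf hg])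
  have hΨ₂0 : Ψ₂ 0 = 0 := Subtype.ext (by rw [hΨ₂]; simp only; rw [hc0, psi_zero hf hg]; norm_num)
  have hΨ₂1 : Ψ₂ 1 = 1 := Subtype.ext (by rw [hΨ₂]; simp only; rw [hc1, psi_one hf hg]; norm_num)
  -- the compositions agree
  have hcomp : φ₁ ∘ Ψ₁ = φ₂ ∘ Ψ₂ := by
    funext u
    apply Subtype.ext
    have h1 : (↑(φ₁ (Ψ₁ u)) : ℝ) = f (psi f g ↑u) := (ext_eq φ₁ (psi_mem hf hg u.2).1).symm
    have h2 : (↑(φ₂ (Ψ₂ u)) : ℝ) = g (2 * ↑u - psi f g ↑u) :=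
      (ext_eq φ₂ (psi_mem hf hg u.2).2.1).symm
    show (↑(φ₁ (Ψ₁ u)) : ℝ) = ↑(φ₂ (Ψ₂ u))
    rw [h1, h2]
    exact (psi_mem hf hg u.2).2.2
  -- key coordinate identities
  have hΨval : ∀ u : I, (↑(Ψ₁ u) : ℝ) = psi f g ↑u := fun u => rfl
  have hΨ₂val : ∀ u : I, (↑(Ψ₂ u) : ℝ) = 2 * ↑u - psi f g ↑u := fun u => rfl
  -- surjectivity of Ψ₁ and Ψ₂
  have hsurj1 : Function.Surjective Ψ₁ := by
    intro w
    obtain ⟨u, hu, huw⟩ := surj_on_Icc (lip_continuousOn hlip)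
      (psi_zero hf hg) (psi_one hf hg) w.2
    exact ⟨⟨u, hu⟩, Subtype.ext huw⟩
  have hsurj2 : Function.Surjective Ψ₂ := by
    intro w
    have hlip2 : ∀ u ∈ Icc (0:ℝ) 1, ∀ u' ∈ Icc (0:ℝ) 1,
        |(2*u' - psi f g u') - (2*u - psi f g u)| ≤ 2 * |u' - u| := by
      intro u hu u' hu'
      rcases le_total u u' with h | h
      · obtain ⟨ha, hb⟩ := psi_mono hf hg hu hu' h
        rw [abs_of_nonneg (by linarith), abs_of_nonneg (by linarith)]
        linarith
      · obtain ⟨ha, hb⟩ := psi_mono hf hg hu' hu h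
        rw [abs_of_nonpos (by linarith), abs_of_nonpos (by linarith)]
        linarith
    obtain ⟨u, hu, huw⟩ := surj_on_Icc (lip_continuousOn hlip2)
      (by rw [psi_zero hf hg]; ring) (by rw [psi_one hf hg]; ring) w.2
    exact ⟨⟨u, hu⟩, Subtype.ext huw⟩
  refine ⟨Ψ₁, Ψ₂, ⟨hΨ₁cont, hΨ₁mono, hΨ₁0, hΨ₁1⟩, ⟨hΨ₂cont, hΨ₂mono, hΨ₂0, hΨ₂1⟩, hcomp, ?_⟩
  -- the stop value computation
  have hpc : Continuous (φ₁ ∘ Ψ₁) := h₁.1.comp hΨ₁cont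
  have hpm : Monotone (φ₁ ∘ Ψ₁) := fun u v huv => h₁.2.1 (hΨ₁mono huv)
  rw [stopValues_char hpc hpm, stopValues_char h₁.1 h₁.2.1, stopValues_char h₂.1 h₂.2.1]
  ext y
  constructor
  · rintro ⟨u, v, huv, hu, hv⟩
    rcases lt_or_eq_of_le (hΨ₁mono (le_of_lt huv)) with hlt | heq
    · exact Or.inl ⟨Ψ₁ u, Ψ₁ v, hlt, hu, hv⟩
    · right
      have hcompu := congrFun hcomp u
      have hcompv := congrFun hcomp v
      simp only [Function.comp_apply] at hcompu hcompv hu hv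
      refine ⟨Ψ₂ u, Ψ₂ v, ?_, by rw [← hcompu]; exact hu, by rw [← hcompv]; exact hv⟩
      rw [← Subtype.coe_lt_coe, hΨ₂val, hΨ₂val]
      have h1 : psi f g ↑u = psi f g ↑v := by
        have := congrArg (Subtype.val) heq
        rw [hΨval, hΨval] at this
        exact this
      have huv' : (u:ℝ) < ↑v := huv
      linarith
  · rintro (⟨s, s', hss', hs, hs'⟩ | ⟨t, t', htt', ht, ht'⟩)
    · obtain ⟨u, hu⟩ := hsurj1 s
      obtain ⟨v, hv⟩ := hsurj1 s'
      have huv : u < v := by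
        by_contra hcon
        push_neg at hcon
        have := hΨ₁mono hcon
        rw [hu, hv] at this
        exact absurd hss' (not_lt_of_ge this)
      exact ⟨u, v, huv, by simp [Function.comp_apply, hu, hs],
        by simp [Function.comp_apply, hv, hs']⟩
    · obtain ⟨u, hu⟩ := hsurj2 t
      obtain ⟨v, hv⟩ := hsurj2 t'
      have huv : u < v := by
        by_contra hcon
        push_neg at hcon
        have := hΨ₂mono hcon
        rw [hu, hv] at this
        exact absurd htt' (not_lt_of_ge this)
      have hcompu := congrFun hcomp u
      have hcompv := congrFun hcomp v
      simp only [Function.comp_apply] at hcompu hcompv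
      exact ⟨u, v, huv, by simp only [Function.comp_apply]; rw [hcompu, hu]; exact ht,
        by simp only [Function.comp_apply]; rw [hcompv, hv]; exact ht'⟩
end

section
/- Let X be a Hausdorff space, let p : I → X be a regular path, and let φ : I → I be a reparametrization. If p ∘ φ = p, then φ = id_I or p is constant. In particular, for x ≠ y in X, the right action of the group Homeo₊(I) of increasing self-homeomorphisms of I on the set of regular paths from x to y is free. -/
/-!
If `t < φ t`, the orbit `φⁿ t` increases to a limit `L`, which is a fixed point of `φ` by
continuity. Monotonicity squeezes the orbit of every `s ∈ [t, L]` between `φⁿ t` and `L`, so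
it also tends to `L`; since `p` is constant along orbits and continuous with values in a
Hausdorff space, `p s = p L`. Thus `p` is constant on `[t, L]`, contradicting regularity.
The case `φ t < t` is the same argument in the dual order.
-/

open unitInterval

/-- A path `p : I → X` is regular if it is constant on no nondegenerate
closed subinterval of `I`, unless it is constant on all of `I`. -/
def IsRegularPath {X : Type*} (p : I → X) : Prop :=
  (∀ s t : I, p s = p t) ∨ ∀ a b : I, a < b → ¬ ConstOn p a b

open Filter Topology Function

theorem comp_iterate_eq_self_of_comp_eq_self {α X : Type*} {p : α → X} {φ : α → α}
    (hpφ : p ∘ φ = p) (n : ℕ) : p ∘ φ^[n] = p := by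
  induction n with
  | zero => rfl
  | succ n ih => rw [iterate_succ', ← comp_assoc, hpφ, ih]

theorem apply_eq_of_tendsto_iterate {α X : Type*} [TopologicalSpace α] [TopologicalSpace X]
    [T2Space X] {p : α → X} {φ : α → α} (hp : Continuous p) (hpφ : p ∘ φ = p) {s L : α}
    (hs : Tendsto (fun n ↦ φ^[n] s) atTop (𝓝 L)) : p s = p L := by
  have hconst : Tendsto (fun n ↦ p (φ^[n] s)) atTop (𝓝 (p s)) := by
    simp only [← comp_apply (f := p), comp_iterate_eq_self_of_comp_eq_self hpφ]
    exact tendsto_const_nhds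
  exact tendsto_nhds_unique hconst ((hp.tendsto L).comp hs)

section CompleteLinearOrder

variable {α : Type*} [CompleteLinearOrder α] [TopologicalSpace α] [OrderTopology α]
  {φ : α → α} {t : α}

theorem Monotone.tendsto_iterate_iSup (hφm : Monotone φ) (ht : t ≤ φ t) :
    Tendsto (fun n ↦ φ^[n] t) atTop (𝓝 (⨆ n, φ^[n] t)) :=
  tendsto_atTop_iSup (hφm.monotone_iterate_of_le_map ht)

theorem Continuous.isFixedPt_iSup_iterate (hφc : Continuous φ) (hφm : Monotone φ)
    (ht : t ≤ φ t) : IsFixedPt φ (⨆ n, φ^[n] t) := by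
  have hlim := hφm.tendsto_iterate_iSup ht
  have hshift : Tendsto (fun n ↦ φ (φ^[n] t)) atTop (𝓝 (⨆ n, φ^[n] t)) := by
    simpa only [comp_def, iterate_succ_apply'] using hlim.comp (tendsto_add_atTop_nat 1)
  exact tendsto_nhds_unique ((hφc.tendsto _).comp hlim) hshift

theorem Continuous.tendsto_iterate_of_mem_Icc (hφc : Continuous φ) (hφm : Monotone φ)
    (ht : t ≤ φ t) {s : α} (hs : s ∈ Set.Icc t (⨆ n, φ^[n] t)) :
    Tendsto (fun n ↦ φ^[n] s) atTop (𝓝 (⨆ n, φ^[n] t)) := by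
  refine tendsto_of_tendsto_of_tendsto_of_le_of_le (hφm.tendsto_iterate_iSup ht)
    tendsto_const_nhds (fun n ↦ (hφm.iterate n) hs.1) (fun n ↦ ?_)
  calc φ^[n] s ≤ φ^[n] (⨆ n, φ^[n] t) := (hφm.iterate n) hs.2
    _ = ⨆ n, φ^[n] t := (hφc.isFixedPt_iSup_iterate hφm ht).iterate n

variable {X : Type*} [TopologicalSpace X] [T2Space X] {p : α → X}

theorem exists_gt_forall_Icc_eq_of_lt_apply (hp : Continuous p) (hφc : Continuous φ)
    (hφm : Monotone φ) (hpφ : p ∘ φ = p) (ht : t < φ t) :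
    ∃ L, t < L ∧ ∀ s ∈ Set.Icc t L, p s = p L :=
  ⟨⨆ n, φ^[n] t, ht.trans_le (le_iSup (fun n ↦ φ^[n] t) 1),
    fun _ hs ↦ apply_eq_of_tendsto_iterate hp hpφ (hφc.tendsto_iterate_of_mem_Icc hφm ht.le hs)⟩

theorem exists_lt_forall_Icc_eq_of_apply_lt (hp : Continuous p) (hφc : Continuous φ)
    (hφm : Monotone φ) (hpφ : p ∘ φ = p) (ht : φ t < t) :
    ∃ L, L < t ∧ ∀ s ∈ Set.Icc L t, p s = p L := by
  obtain ⟨L, hL, hconst⟩ := exists_gt_forall_Icc_eq_of_lt_apply (α := αᵒᵈ) (φ := φ) (p := p)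
    hp hφc hφm.dual hpφ ht
  exact ⟨L, hL, fun s hs ↦ hconst s ⟨hs.2, hs.1⟩⟩

end CompleteLinearOrder

theorem eq_id_of_comp_eq_self_of_not_constOn {X : Type*} [TopologicalSpace X] [T2Space X]
    {p : I → X} (hp : Continuous p) (hreg : ∀ a b : I, a < b → ¬ ConstOn p a b)
    {φ : I → I} (hφc : Continuous φ) (hφm : Monotone φ) (hpφ : p ∘ φ = p) : φ = id := by
  funext t
  rcases lt_trichotomy (φ t) t with hlt | heq | hgt
  · obtain ⟨L, hL, hconst⟩ := exists_lt_forall_Icc_eq_of_apply_lt hp hφc hφm hpφ hlt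
    exact (hreg L t hL fun s hs r hr ↦ (hconst s hs).trans (hconst r hr).symm).elim
  · exact heq
  · obtain ⟨L, hL, hconst⟩ := exists_gt_forall_Icc_eq_of_lt_apply hp hφc hφm hpφ hgt
    exact (hreg t L hL fun s hs r hr ↦ (hconst s hs).trans (hconst r hr).symm).elim

/-- If a regular path `p : I → X` in a Hausdorff space satisfies
`p ∘ φ = p` for a reparametrization `φ`, then `φ = id` or `p` is constant.
In particular, for `x ≠ y` the right action of `Homeo₊(I)` on the set of
regular paths from `x` to `y` is free. -/
theorem regular_path_repar_fixed_eq_id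
    {X : Type*} [TopologicalSpace X] [T2Space X] :
    (∀ p : I → X, Continuous p → IsRegularPath p →
      ∀ φ : I → I, IsRepar φ → p ∘ φ = p →
        φ = id ∨ ∀ s t : I, p s = p t) ∧
    (∀ x y : X, x ≠ y →
      ∀ p : I → X, Continuous p → IsRegularPath p → p 0 = x → p 1 = y →
        ∀ ρ : I → I, IsRepar ρ → StrictMono ρ → p ∘ ρ = p → ρ = id) := by
  have fixed_eq_id : ∀ p : I → X, Continuous p → IsRegularPath p →
      ∀ φ : I → I, IsRepar φ → p ∘ φ = p → φ = id ∨ ∀ s t : I, p s = p t := by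
    rintro p hp (hconst | hreg) φ ⟨hφc, hφm, -, -⟩ hpφ
    · exact Or.inr hconst
    · exact Or.inl (eq_id_of_comp_eq_self_of_not_constOn hp hreg hφc hφm hpφ)
  refine ⟨fixed_eq_id, fun x y hxy p hp hreg hx hy ρ hρ _ hpρ ↦ ?_⟩
  refine (fixed_eq_id p hp hreg ρ hρ hpρ).resolve_right fun hconst ↦ hxy ?_
  rw [← hx, ← hy, hconst]
end

section
/- Let X be a Hausdorff space. For every continuous path p : I → X there exist a regular path q : I → X and a reparametrization φ : I → I such that p = q ∘ φ. -/
/-!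
Call the maximal closed intervals on which `p` is constant its plateaus. Two times lie in a
common plateau iff they have the same plateau start, the left end of their plateau, and
continuity of `p` shows that between two distinct plateau starts there is the plateau start of a
point of any dense set. Hence the plateau starts of a countable dense set of times, taken
strictly between those of `0` and `1`, form a countable dense linear order without endpoints,
which by Cantor's theorem embeds into `I` with dense image. Extending this embedding by suprema
gives a monotone map `φ` with dense range, hence continuous and onto, which identifies exactly
the points of a common plateau. Being a closed map, `φ` is a quotient map, so `p` descends to a
continuous path `q` with `p = q ∘ φ`, and `q` is regular because `φ` collapses every plateau.
-/

open unitInterval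

open Set Function

section ConstOn

variable {X : Type*} {p : I → X} {a b a' b' c : I}

theorem constOn_self (p : I → X) (a : I) : ConstOn p a a := by
  rintro s hs t ht
  rw [Icc_self, mem_singleton_iff] at hs ht
  rw [hs, ht]

theorem ConstOn.apply_eq (h : ConstOn p a b) (hab : a ≤ b) : p a = p b :=
  h a ⟨le_rfl, hab⟩ b ⟨hab, le_rfl⟩

theorem ConstOn.mono (h : ConstOn p a b) (ha : a ≤ a') (hb : b' ≤ b) : ConstOn p a' b' :=
  fun s hs t ht => h s (Icc_subset_Icc ha hb hs) t (Icc_subset_Icc ha hb ht)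

theorem ConstOn.trans (hab : ConstOn p a b) (hbc : ConstOn p b c) (h₁ : a ≤ b) (h₂ : b ≤ c) :
    ConstOn p a c := by
  have key : ∀ x ∈ Icc a c, p x = p b := by
    rintro x ⟨hax, hxc⟩
    rcases le_total x b with hxb | hbx
    · exact hab x ⟨hax, hxb⟩ b ⟨h₁, le_rfl⟩
    · exact hbc x ⟨hbx, hxc⟩ b ⟨le_rfl, h₂⟩
  exact fun s hs t ht => (key s hs).trans (key t ht).symm

theorem ConstOn.comp {Y : Type*} {q : I → Y} {φ : I → I} (h : ConstOn q a b)
    (hφ : MapsTo φ (Icc a' b') (Icc a b)) : ConstOn (q ∘ φ) a' b' :=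
  fun _ hs _ ht => h _ (hφ hs) _ (hφ ht)

theorem constOn_of_forall_Ioo [TopologicalSpace X] [T2Space X] (hp : Continuous p) (hab : a < b)
    {x₀ : X} (h : ∀ x ∈ Ioo a b, p x = x₀) : ConstOn p a b := by
  have hIcc : EqOn p (fun _ => x₀) (Icc a b) := by
    simpa only [closure_Ioo hab.ne] using (EqOn.closure h hp continuous_const)
  exact fun s hs t ht => (hIcc hs).trans (hIcc ht).symm

end ConstOn

/-- The left end of the maximal interval of constancy of `p` containing `t`. -/
noncomputable def plateauStart {X : Type*} (p : I → X) (t : I) : I :=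
  sInf {s | ConstOn p s t}

section plateauStart

variable {X : Type*} {p : I → X} {s t : I}

theorem plateauStart_le (p : I → X) (t : I) : plateauStart p t ≤ t :=
  sInf_le (constOn_self p t)

theorem plateauStart_zero (p : I → X) : plateauStart p 0 = 0 :=
  le_bot_iff.1 (plateauStart_le p 0)

variable [TopologicalSpace X] [T2Space X]

theorem constOn_plateauStart (hp : Continuous p) (t : I) : ConstOn p (plateauStart p t) t := by
  rcases (plateauStart_le p t).lt_or_eq with hlt | heq
  · refine constOn_of_forall_Ioo hp hlt (x₀ := p t) fun x hx => ?_
    obtain ⟨s, hs, hsx⟩ := sInf_lt_iff.1 hx.1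
    exact hs x ⟨hsx.le, hx.2.le⟩ t ⟨(hsx.trans hx.2).le, le_rfl⟩
  · rw [heq]
    exact constOn_self p t

theorem constOn_iff_plateauStart_le (hp : Continuous p) :
    ConstOn p s t ↔ plateauStart p t ≤ s :=
  ⟨fun h => sInf_le h, fun h => (constOn_plateauStart hp t).mono h le_rfl⟩

theorem plateauStart_mono (hp : Continuous p) : Monotone (plateauStart p) := by
  intro s t hst
  by_cases h : plateauStart p t ≤ s
  · exact sInf_le ((constOn_plateauStart hp t).mono le_rfl hst)
  · exact (plateauStart_le p s).trans (not_le.1 h).le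

theorem plateauStart_eq_iff_constOn (hp : Continuous p) (hst : s ≤ t) :
    plateauStart p s = plateauStart p t ↔ ConstOn p s t := by
  refine ⟨fun h => (constOn_iff_plateauStart_le hp).2 (h ▸ plateauStart_le p s), fun h => ?_⟩
  refine (plateauStart_mono hp hst).antisymm (sInf_le ?_)
  exact (constOn_plateauStart hp s).trans h (plateauStart_le p s) hst

theorem plateauStart_plateauStart (hp : Continuous p) (t : I) :
    plateauStart p (plateauStart p t) = plateauStart p t :=
  (plateauStart_eq_iff_constOn hp (plateauStart_le p t)).2 (constOn_plateauStart hp t)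

theorem apply_eq_of_plateauStart_eq (hp : Continuous p) (h : plateauStart p s = plateauStart p t) :
    p s = p t := by
  rw [← (constOn_plateauStart hp s).apply_eq (plateauStart_le p s), h,
    (constOn_plateauStart hp t).apply_eq (plateauStart_le p t)]

theorem exists_plateauStart_btwn (hp : Continuous p) {D : Set I} (hD : Dense D)
    (h : plateauStart p s < plateauStart p t) :
    ∃ d ∈ D, plateauStart p s < plateauStart p d ∧ plateauStart p d < plateauStart p t := by
  obtain ⟨u, hu, hsu⟩ :
      ∃ u ∈ Ioo (plateauStart p s) (plateauStart p t), plateauStart p s < plateauStart p u := by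
    by_contra! hflat
    have hconst : ConstOn p (plateauStart p s) (plateauStart p t) := by
      refine constOn_of_forall_Ioo hp h (x₀ := p (plateauStart p s)) fun u hu =>
        apply_eq_of_plateauStart_eq hp ?_
      rw [plateauStart_plateauStart hp]
      refine (hflat u hu).antisymm ?_
      simpa only [plateauStart_plateauStart hp] using plateauStart_mono hp hu.1.le
    have := (plateauStart_eq_iff_constOn hp h.le).2 hconst
    rw [plateauStart_plateauStart hp, plateauStart_plateauStart hp] at this
    exact h.ne this
  obtain ⟨d, hdD, hd⟩ := hD.exists_mem_open isOpen_Ioo (nonempty_Ioo.2 hu.2)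
  exact ⟨d, hdD, hsu.trans_le (plateauStart_mono hp hd.1.le), (plateauStart_le p d).trans_lt hd.2⟩

end plateauStart

def plateauStarts {X : Type*} (p : I → X) (D : Set I) : Set I :=
  plateauStart p '' D ∩ Ioo 0 (plateauStart p 1)

section plateauStarts

variable {X : Type*} {p : I → X} {D : Set I}

theorem countable_plateauStarts (hD : D.Countable) : Countable (plateauStarts p D) :=
  ((hD.image _).mono inter_subset_left).to_subtype

variable [TopologicalSpace X] [T2Space X]

theorem exists_mem_plateauStarts_btwn (hp : Continuous p) (hD : Dense D) {s t : I}
    (h : plateauStart p s < plateauStart p t) :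
    ∃ x ∈ plateauStarts p D, plateauStart p s < x ∧ x < plateauStart p t := by
  obtain ⟨d, hdD, hsd, hdt⟩ := exists_plateauStart_btwn hp hD h
  refine ⟨plateauStart p d, ⟨mem_image_of_mem _ hdD, ?_, ?_⟩, hsd, hdt⟩
  · exact ((plateauStart_zero p).symm.trans_le (plateauStart_mono hp nonneg')).trans_lt hsd
  · exact hdt.trans_le (plateauStart_mono hp le_one')

theorem plateauStart_of_mem_plateauStarts (hp : Continuous p) {x : I}
    (hx : x ∈ plateauStarts p D) : plateauStart p x = x := by
  obtain ⟨⟨d, -, rfl⟩, -⟩ := hx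
  exact plateauStart_plateauStart hp d

theorem denselyOrdered_plateauStarts (hp : Continuous p) (hD : Dense D) :
    DenselyOrdered (plateauStarts p D) := by
  refine ⟨fun x y hxy => ?_⟩
  have h : plateauStart p x < plateauStart p y := by
    rwa [plateauStart_of_mem_plateauStarts hp x.2, plateauStart_of_mem_plateauStarts hp y.2]
  obtain ⟨z, hz, hxz, hzy⟩ := exists_mem_plateauStarts_btwn hp hD h
  rw [plateauStart_of_mem_plateauStarts hp x.2] at hxz
  rw [plateauStart_of_mem_plateauStarts hp y.2] at hzy
  exact ⟨⟨z, hz⟩, hxz, hzy⟩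

theorem noMinOrder_plateauStarts (hp : Continuous p) (hD : Dense D) :
    NoMinOrder (plateauStarts p D) := by
  refine ⟨fun x => ?_⟩
  have h : plateauStart p 0 < plateauStart p x := by
    rw [plateauStart_zero, plateauStart_of_mem_plateauStarts hp x.2]
    exact x.2.2.1
  obtain ⟨z, hz, -, hzx⟩ := exists_mem_plateauStarts_btwn hp hD h
  rw [plateauStart_of_mem_plateauStarts hp x.2] at hzx
  exact ⟨⟨z, hz⟩, hzx⟩

theorem noMaxOrder_plateauStarts (hp : Continuous p) (hD : Dense D) :
    NoMaxOrder (plateauStarts p D) := by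
  refine ⟨fun x => ?_⟩
  have h : plateauStart p x < plateauStart p 1 := by
    rw [plateauStart_of_mem_plateauStarts hp x.2]
    exact x.2.2.2
  obtain ⟨z, hz, hxz, -⟩ := exists_mem_plateauStarts_btwn hp hD h
  rw [plateauStart_of_mem_plateauStarts hp x.2] at hxz
  exact ⟨⟨z, hz⟩, hxz⟩

theorem nonempty_plateauStarts (hp : Continuous p) (hD : Dense D) (hnc : ¬ ConstOn p 0 1) :
    Nonempty (plateauStarts p D) := by
  have h : plateauStart p 0 < plateauStart p 1 :=
    (plateauStart_mono hp nonneg').lt_of_ne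
      (mt (plateauStart_eq_iff_constOn hp nonneg').1 hnc)
  obtain ⟨z, hz, -⟩ := exists_mem_plateauStarts_btwn hp hD h
  exact ⟨⟨z, hz⟩⟩

end plateauStarts

theorem exists_strictMono_denseRange_unitInterval (α : Type*) [LinearOrder α] [Countable α]
    [DenselyOrdered α] [NoMinOrder α] [NoMaxOrder α] [Nonempty α] :
    ∃ E : α → I, StrictMono E ∧ DenseRange E := by
  have : Nonempty (Ioo (0 : ℚ) 1) := ⟨⟨1 / 2, by norm_num, by norm_num⟩⟩
  obtain ⟨e⟩ := Order.iso_of_countable_dense α (Ioo (0 : ℚ) 1)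
  let ι : Ioo (0 : ℚ) 1 → I := fun r =>
    ⟨(r : ℚ), by exact_mod_cast r.2.1.le, by exact_mod_cast r.2.2.le⟩
  have hι : StrictMono ι := fun r r' h => show ((r : ℚ) : ℝ) < (r' : ℚ) by exact_mod_cast h
  refine ⟨ι ∘ e, hι.comp e.strictMono, ?_⟩
  rw [DenseRange, e.surjective.range_comp]
  refine dense_of_exists_between fun a b hab => ?_
  obtain ⟨r, har, hrb⟩ := exists_rat_btwn (show (a : ℝ) < b from hab)
  have hr : r ∈ Ioo (0 : ℚ) 1 := by
    constructor
    · exact_mod_cast a.2.1.trans_lt har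
    · exact_mod_cast hrb.trans_le b.2.2
  exact ⟨ι ⟨r, hr⟩, mem_range_self _, har, hrb⟩

noncomputable def supExtend {α : Type*} [LinearOrder α] {Q : Set α} (E : Q → I) (y : α) : I :=
  ⨆ (x : Q) (_ : (x : α) ≤ y), E x

section supExtend

variable {α : Type*} [LinearOrder α] {Q : Set α} {E : Q → I}

theorem supExtend_mono : Monotone (supExtend E) :=
  fun _ _ hyz => iSup₂_mono' fun x hx => ⟨x, hx.trans hyz, le_rfl⟩

theorem supExtend_coe (hE : StrictMono E) (x : Q) : supExtend E x = E x :=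
  le_antisymm (iSup₂_le fun _ hx' => hE.monotone (Subtype.coe_le_coe.1 hx'))
    (le_iSup₂_of_le x le_rfl le_rfl)

theorem supExtend_lt_supExtend (hE : StrictMono E) {x y : Q} (hxy : x < y) {a b : α}
    (ha : a ≤ x) (hb : (y : α) ≤ b) : supExtend E a < supExtend E b :=
  calc supExtend E a ≤ supExtend E x := supExtend_mono ha
    _ = E x := supExtend_coe hE x
    _ < E y := hE hxy
    _ = supExtend E y := (supExtend_coe hE y).symm
    _ ≤ supExtend E b := supExtend_mono hb

theorem supExtend_eq_zero {y : α} (hy : ∀ x ∈ Q, y < x) : supExtend E y = 0 :=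
  le_bot_iff.1 (iSup₂_le fun x hx => absurd hx (hy x x.2).not_ge)

theorem supExtend_eq_one (hE : DenseRange E) {y : α} (hy : ∀ x ∈ Q, x ≤ y) :
    supExtend E y = 1 := by
  refine iSup_eq_top.2 fun b hb => ?_
  obtain ⟨x, hx⟩ := hE.exists_mem_open isOpen_Ioi ⟨⊤, hb⟩
  exact ⟨x, lt_of_lt_of_le hx (le_iSup (fun _ : (x : α) ≤ y => E x) (hy x x.2))⟩

end supExtend

section Factorization

variable {X : Type*} [TopologicalSpace X] {p : I → X}

theorem exists_isRepar_eq_iff_constOn [T2Space X] (hp : Continuous p) (hnc : ¬ ConstOn p 0 1) :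
    ∃ φ : I → I, IsRepar φ ∧ ∀ s t, s ≤ t → (φ s = φ t ↔ ConstOn p s t) := by
  obtain ⟨D, hDc, hD⟩ := TopologicalSpace.exists_countable_dense I
  have := countable_plateauStarts (p := p) hDc
  have := denselyOrdered_plateauStarts hp hD
  have := noMinOrder_plateauStarts hp hD
  have := noMaxOrder_plateauStarts hp hD
  have := nonempty_plateauStarts hp hD hnc
  obtain ⟨E, hE, hEd⟩ := exists_strictMono_denseRange_unitInterval (plateauStarts p D)
  set φ := supExtend E ∘ plateauStart p
  have hφm : Monotone φ := supExtend_mono.comp (plateauStart_mono hp)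
  have hφE : range E ⊆ range φ := by
    rintro _ ⟨x, rfl⟩
    refine ⟨x, ?_⟩
    simp only [φ, comp_apply, plateauStart_of_mem_plateauStarts hp x.2, supExtend_coe hE]
  refine ⟨φ, ⟨hφm.continuous_of_denseRange (hEd.mono hφE), hφm, ?_, ?_⟩, fun s t hst => ?_⟩
  · exact supExtend_eq_zero fun x hx => by rw [plateauStart_zero]; exact hx.2.1
  · exact supExtend_eq_one hEd fun x hx => hx.2.2.le
  refine ⟨fun h => ?_, fun h => congrArg (supExtend E) ((plateauStart_eq_iff_constOn hp hst).2 h)⟩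
  by_contra hnst
  have hlt := (plateauStart_mono hp hst).lt_of_ne (mt (plateauStart_eq_iff_constOn hp hst).1 hnst)
  obtain ⟨x, hx, hsx, hxt⟩ := exists_mem_plateauStarts_btwn hp hD hlt
  obtain ⟨y, hy, hxy, hyt⟩ :=
    exists_mem_plateauStarts_btwn hp hD ((plateauStart_of_mem_plateauStarts hp hx).symm ▸ hxt)
  rw [plateauStart_of_mem_plateauStarts hp hx] at hxy
  exact (supExtend_lt_supExtend hE (x := ⟨x, hx⟩) (y := ⟨y, hy⟩) hxy hsx.le hyt.le).ne h

theorem IsRepar.surjective_s14 {φ : I → I} (hφ : IsRepar φ) : Surjective φ := by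
  intro y
  have hrange := intermediate_value_univ 0 1 hφ.1
  rw [hφ.2.2.1, hφ.2.2.2] at hrange
  exact hrange ⟨nonneg', le_one'⟩

theorem exists_regular_factor_of_isRepar (hp : Continuous p) {φ : I → I} (hφ : IsRepar φ)
    (hφp : ∀ s t, s ≤ t → (φ s = φ t ↔ ConstOn p s t)) :
    ∃ q : I → X, Continuous q ∧ (∀ a b, a < b → ¬ ConstOn q a b) ∧ p = q ∘ φ := by
  have hsurj := hφ.surjective_s14
  obtain ⟨hφc, hφm, -, -⟩ := hφ
  set ψ := surjInv hsurj
  have hφψ : ∀ a, φ (ψ a) = a := surjInv_eq hsurj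
  have hfac : p = (p ∘ ψ) ∘ φ := by
    funext t
    rcases le_total (ψ (φ t)) t with h | h
    · exact ((hφp _ _ h).1 (hφψ _)).apply_eq h |>.symm
    · exact ((hφp _ _ h).1 (hφψ _).symm).apply_eq h
  refine ⟨p ∘ ψ, ?_, fun a b hab hq => hab.ne ?_, hfac⟩
  · rw [(hφc.isClosedMap.isQuotientMap hφc hsurj).continuous_iff, ← hfac]
    exact hp
  have hψ : ψ a ≤ ψ b := (hφm.reflect_lt (by rwa [hφψ, hφψ])).le
  have hconst : ConstOn p (ψ a) (ψ b) := by
    rw [hfac]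
    exact hq.comp (by simpa only [hφψ] using hφm.mapsTo_Icc (a := ψ a) (b := ψ b))
  rw [← hφψ a, ← hφψ b]
  exact (hφp _ _ hψ).2 hconst

end Factorization

/-- Every continuous path `p : I → X` into a Hausdorff space factors as
`p = q ∘ φ` with `q` a regular (continuous) path and `φ` a
reparametrization. -/
theorem exists_regular_factorization
    {X : Type*} [TopologicalSpace X] [T2Space X]
    (p : I → X) (hp : Continuous p) :
    ∃ (q : I → X) (φ : I → I), Continuous q ∧ IsRegularPath q ∧
      IsRepar φ ∧ p = q ∘ φ := by
  by_cases hconst : ConstOn p 0 1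
  · refine ⟨p, id, hp, Or.inl fun s t => ?_, ⟨continuous_id, monotone_id, rfl, rfl⟩, rfl⟩
    exact hconst s ⟨nonneg', le_one'⟩ t ⟨nonneg', le_one'⟩
  obtain ⟨φ, hφ, hφp⟩ := exists_isRepar_eq_iff_constOn hp hconst
  obtain ⟨q, hq, hreg, hpq⟩ := exists_regular_factor_of_isRepar hp hφ hφp
  exact ⟨q, φ, hq, Or.inr hreg, hφ, hpq⟩
end

section
/- Let X be a Hausdorff space and let p, q : I → X be regular paths with the same endpoints (p(0) = q(0), p(1) = q(1)). If p and q are reparametrization equivalent, then they are strictly reparametrization equivalent: there exists an increasing self-homeomorphism η of I such that q = p ∘ η. -/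
open unitInterval

/-- Two paths `p, q : I → X` are reparametrization equivalent if
`p ∘ φ = q ∘ ψ` for some reparametrizations `φ, ψ` of `I`. -/
def ReparEquiv {X : Type*} (p q : I → X) : Prop :=
  ∃ φ ψ : I → I, IsRepar φ ∧ IsRepar ψ ∧ p ∘ φ = q ∘ ψ

section Aux

noncomputable local instance : Inhabited I := ⟨0⟩

lemma aux_zero_lt_one : (0 : I) < 1 := by
  rw [Subtype.mk_lt_mk]; norm_num

/-- A continuous map `I → I` fixing the endpoints is surjective. -/
lemma aux_surj (f : I → I) (hc : Continuous f) (h0 : f 0 = 0) (h1 : f 1 = 1) :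
    Function.Surjective f := by
  intro c
  have h01 : (0 : I) ≤ 1 := le_of_lt aux_zero_lt_one
  have key := intermediate_value_Icc h01 hc.continuousOn
  rw [h0, h1] at key
  have hc' : c ∈ Set.Icc (0 : I) (1 : I) := ⟨c.2.1, c.2.2⟩
  obtain ⟨t, _, ht⟩ := key hc'
  exact ⟨t, ht⟩

/-- If `p ∘ φ = q ∘ ψ` and `p` is nowhere locally constant, then `φ` is
constant on the fibers of `ψ`. -/
lemma aux_fiber {X : Type*} (p q : I → X) (φ ψ : I → I)
    (hφc : Continuous φ) (hφm : Monotone φ) (hψm : Monotone ψ)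
    (hreg : ∀ a b : I, a < b → ¬ ConstOn p a b)
    (heq : ∀ t, p (φ t) = q (ψ t)) :
    ∀ t t', ψ t = ψ t' → φ t = φ t' := by
  have main : ∀ t t', t ≤ t' → ψ t = ψ t' → φ t = φ t' := by
    intro t t' htt hps
    by_contra hne
    have hlt : φ t < φ t' := lt_of_le_of_ne (hφm htt) hne
    refine hreg _ _ hlt ?_
    have himg : Set.Icc (φ t) (φ t') ⊆ φ '' Set.Icc t t' :=
      intermediate_value_Icc htt hφc.continuousOn
    have hval : ∀ s ∈ Set.Icc (φ t) (φ t'), p s = q (ψ t) := by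
      intro s hs
      obtain ⟨u, hu, rfl⟩ := himg hs
      have huψ : ψ u = ψ t := le_antisymm (hps ▸ hψm hu.2) (hψm hu.1)
      rw [heq u, huψ]
    intro s hs u hu
    rw [hval s hs, hval u hu]
  intro t t' hps
  rcases le_total t t' with h' | h'
  · exact main t t' h' hps
  · exact (main t' t h' hps.symm).symm

end Aux

/-- Two regular paths in a Hausdorff space with the same endpoints which are
reparametrization equivalent are strictly reparametrization equivalent:
`q = p ∘ η` for an increasing self-homeomorphism `η` of `I`. -/
theorem regular_reparEquiv_strict
    {X : Type*} [TopologicalSpace X] [T2Space X]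
    (p q : I → X) (hp : Continuous p) (hq : Continuous q)
    (hrp : IsRegularPath p) (hrq : IsRegularPath q)
    (h0 : p 0 = q 0) (h1 : p 1 = q 1) (h : ReparEquiv p q) :
    ∃ η : I → I, IsRepar η ∧ StrictMono η ∧ q = p ∘ η := by
  classical
  haveI : Inhabited I := ⟨0⟩
  obtain ⟨φ, ψ, ⟨hφc, hφm, hφ0, hφ1⟩, ⟨hψc, hψm, hψ0, hψ1⟩, heqfun⟩ := h
  have heq : ∀ t, p (φ t) = q (ψ t) := fun t => congrFun heqfun t
  have hφs : Function.Surjective φ := aux_surj φ hφc hφ0 hφ1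
  have hψs : Function.Surjective ψ := aux_surj ψ hψc hψ0 hψ1
  rcases hrp with hcp | hrp
  · -- p is constant; then q is constant as well and we may take η = id
    refine ⟨id, ⟨continuous_id, monotone_id, rfl, rfl⟩, strictMono_id, ?_⟩
    funext s
    obtain ⟨t, rfl⟩ := hψs s
    exact (heq t).symm.trans (hcp (φ t) (ψ t))
  · rcases hrq with hcq | hrq
    · -- q constant but p regular and non-constant : contradiction
      exfalso
      refine hrp 0 1 aux_zero_lt_one ?_
      intro s _ t _
      obtain ⟨u, rfl⟩ := hφs s
      obtain ⟨v, rfl⟩ := hφs t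
      rw [heq u, heq v, hcq (ψ u) (ψ v)]
    · -- both are nowhere locally constant
      have fibφ : ∀ t t', ψ t = ψ t' → φ t = φ t' :=
        aux_fiber p q φ ψ hφc hφm hψm hrp heq
      have fibψ : ∀ t t', φ t = φ t' → ψ t = ψ t' :=
        aux_fiber q p ψ φ hψc hψm hφm hrq (fun t => (heq t).symm)
      -- choice of preimages
      set T : I → I := fun s => Classical.choose (hψs s) with hT
      have hTspec : ∀ s, ψ (T s) = s := fun s => Classical.choose_spec (hψs s)
      set S : I → I := fun s => Classical.choose (hφs s) with hS
      have hSspec : ∀ s, φ (S s) = s := fun s => Classical.choose_spec (hφs s)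
      set η : I → I := fun s => φ (T s) with hη
      set θ : I → I := fun s => ψ (S s) with hθ
      have hpη : ∀ s, p (η s) = q s := by
        intro s
        rw [hη]
        simp only
        rw [heq (T s), hTspec s]
      have hθη : ∀ s, θ (η s) = s := by
        intro s
        have : φ (S (η s)) = φ (T s) := by rw [hSspec (η s)]
        have h2 := fibψ _ _ this
        rw [hθ]
        simp only
        rw [h2, hTspec]
      have hηθ : ∀ s, η (θ s) = s := by
        intro s
        have : ψ (T (θ s)) = ψ (S s) := by rw [hTspec (θ s)]
        have h2 := fibφ _ _ this
        rw [hη]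
        simp only
        rw [h2, hSspec]
      have hinj : Function.Injective η := Function.LeftInverse.injective hθη
      have hsurj : Function.Surjective η := Function.RightInverse.surjective hηθ
      have hmono : Monotone η := by
        intro s s' hss
        have hψT : ψ (T s) ≤ ψ (T s') := by rw [hTspec, hTspec]; exact hss
        rcases le_total (T s) (T s') with h' | h'
        · exact hφm h'
        · have : ψ (T s) = ψ (T s') :=
            le_antisymm hψT (hψm h')
          exact le_of_eq (fibφ _ _ this)
      have hsm : StrictMono η := hmono.strictMono_of_injective hinj
      have hη0 : η 0 = 0 := by
        have : ψ (T 0) = ψ 0 := by rw [hTspec, hψ0]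
        have h2 := fibφ _ _ this
        rw [hη]; simp only; rw [h2, hφ0]
      have hη1 : η 1 = 1 := by
        have : ψ (T 1) = ψ 1 := by rw [hTspec, hψ1]
        have h2 := fibφ _ _ this
        rw [hη]; simp only; rw [h2, hφ1]
      have hcont : Continuous η := by
        let e := StrictMono.orderIsoOfSurjective η hsm hsurj
        exact (OrderIso.continuous e)
      refine ⟨η, ⟨hcont, hmono, hη0, hη1⟩, hsm, ?_⟩
      funext s
      exact (hpη s).symm
end
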